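/- arXiv:math/9909123 — 8 statements merged into one kernel-verified Lean document; each statement's English description precedes it below -/
import Mathlib

section
/- Let A be a nondegenerate finite quadratic form and let n be an integer. Then the set A^{n*} is nonempty and is a coset of nA, i.e. A^{n*} = δ₀ + nA for any δ₀ ∈ A^{n*}. Moreover A^{n*} contains an element δ with 2δ = 0. -/
/-!
The nondegenerate form identifies `A` with its group of characters `Hom(A, ℚ/ℤ)` via
`δ ↦ b(·, δ)`: the map is injective, and a finite group has no more `ℚ/ℤ`-valued characters
than elements (they embed into the complex characters). Since `ℚ/ℤ` is divisible, characters
extend along injections, so a character vanishing on `A_n = ker (n •)` factors through `n •`;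
hence the elements `ε` with `b(A_n, ε) = 0` are exactly those of `nA`, and `A^{n*}`, once
nonempty, is a coset of `nA`.

On `A_n` the map `γ ↦ n q(γ)` is a character, and it vanishes on `A_n ∩ 2A` because
`n q(2β) = 2n b(β, β) = b(β, 2nβ)`. It therefore factors through `A/2A`; the element
representing an extension of it to `A/2A` lies in `A^{n*}` and is killed by `2`.
-/

open Function

namespace AddCircle

noncomputable def ratToReal : AddCircle (1 : ℚ) →+ AddCircle (1 : ℝ) :=
  QuotientAddGroup.map _ _ (Rat.castHom ℝ).toAddMonoidHom <|
    AddSubgroup.zmultiples_le.mpr ⟨1, by simp⟩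

lemma ratToReal_injective : Injective ratToReal := by
  refine (injective_iff_map_eq_zero _).mpr fun x hx => ?_
  induction x using QuotientAddGroup.induction_on with
  | H x =>
    obtain ⟨k, hk⟩ := (coe_eq_zero_iff (p := (1 : ℝ))).mp hx
    have hk : (k : ℝ) = x := by simpa using hk
    exact (coe_eq_zero_iff (p := (1 : ℚ))).mpr ⟨k, by rw [zsmul_one]; exact_mod_cast hk⟩

end AddCircle

namespace CharacterModule

variable {A : Type*} [AddCommGroup A]

noncomputable def toAddChar (c : A →+ AddCircle (1 : ℚ)) : AddChar A ℂ :=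
  Circle.coeHom.compAddChar
    (AddCircle.toCircle_addChar.compAddMonoidHom (AddCircle.ratToReal.comp c))

lemma toAddChar_injective : Injective (toAddChar (A := A)) := fun c c' h => by
  ext a
  exact AddCircle.ratToReal_injective <| AddCircle.injective_toCircle one_ne_zero <|
    Subtype.coe_injective (DFunLike.congr_fun h a)

lemma surjective_of_injective [Finite A] {T : A → A →+ AddCircle (1 : ℚ)} (hT : Injective T) :
    Surjective T := by
  have := Fintype.ofFinite A
  have : Finite (A →+ AddCircle (1 : ℚ)) := Finite.of_injective _ toAddChar_injective
  refine ((Nat.bijective_iff_injective_and_card T).mpr ⟨hT, ?_⟩).surjective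
  refine le_antisymm (Nat.card_le_card_of_injective _ hT) ?_
  calc Nat.card (A →+ AddCircle (1 : ℚ)) ≤ Nat.card (AddChar A ℂ) :=
        Nat.card_le_card_of_injective _ toAddChar_injective
    _ = Nat.card A := by simp [Nat.card_eq_fintype_card]

lemma exists_comp_eq_of_ker_le {M N : Type*} [AddCommGroup M] [AddCommGroup N] (u : M →+ N)
    (c : M →+ AddCircle (1 : ℚ)) (h : u.ker ≤ c.ker) :
    ∃ ψ : N →+ AddCircle (1 : ℚ), ψ.comp u = c := by
  obtain ⟨ψ, hψ⟩ := dual_surjective_of_injective (QuotientAddGroup.kerLift u).toIntLinearMap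
    (QuotientAddGroup.kerLift_injective u) (QuotientAddGroup.lift u.ker c h)
  exact ⟨ψ, AddMonoidHom.ext fun a => DFunLike.congr_fun hψ (a : M ⧸ u.ker)⟩

lemma exists_two_torsion_extension {N : AddSubgroup A}
    (χ : N →+ AddCircle (1 : ℚ)) (hχ : ∀ (γ : N) (β : A), (2 : ℤ) • β = γ → χ γ = 0) :
    ∃ ψ : A →+ AddCircle (1 : ℚ), (2 : ℤ) • ψ = 0 ∧ ψ.comp N.subtype = χ := by
  let D := (zsmulAddGroupHom (α := A) (2 : ℤ)).range
  obtain ⟨ψ, hψ⟩ := exists_comp_eq_of_ker_le ((QuotientAddGroup.mk' D).comp N.subtype) χ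
    fun γ hγ => by
      obtain ⟨β, hβ⟩ := (QuotientAddGroup.eq_zero_iff _).mp hγ
      exact hχ γ β hβ
  refine ⟨ψ.comp (QuotientAddGroup.mk' D), AddMonoidHom.ext fun a => ?_, hψ⟩
  have h2a : ((2 : ℤ) • a : A ⧸ D) = 0 := (QuotientAddGroup.eq_zero_iff _).mpr ⟨a, rfl⟩
  simp [← map_zsmul, h2a]

end CharacterModule

namespace AddMonoidHom

variable {A : Type*} [AddCommGroup A] (B : A →+ A →+ AddCircle (1 : ℚ))

/-- `A^{n*}`, where `B δ` is the character `b(·, δ)`. -/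
def nStar (q : A → AddCircle (1 : ℚ)) (n : ℤ) : Set A :=
  {δ | ∀ γ : A, n • γ = 0 → B δ γ = n • q γ}

lemma exists_zsmul_eq_of_apply_eq_zero_on_torsion [Finite A] (hB : Injective B) {n : ℤ}
    {ε : A} (hε : ∀ γ : A, n • γ = 0 → B ε γ = 0) : ∃ δ : A, n • δ = ε := by
  obtain ⟨ψ, hψ⟩ := CharacterModule.exists_comp_eq_of_ker_le (zsmulAddGroupHom (α := A) n) (B ε)
    fun γ hγ => hε γ hγ
  obtain ⟨δ, rfl⟩ := CharacterModule.surjective_of_injective hB ψ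
  exact ⟨δ, hB <| by rw [map_zsmul, ← hψ]; ext γ; simp [map_zsmul]⟩

lemma nStar_eq_coset [Finite A] (hB : Injective B) {q : A → AddCircle (1 : ℚ)} {n : ℤ}
    {δ₀ : A} (hδ₀ : δ₀ ∈ B.nStar q n) : B.nStar q n = {δ | ∃ γ : A, δ = δ₀ + n • γ} := by
  ext δ
  constructor
  · intro hδ
    obtain ⟨γ, hγ⟩ := B.exists_zsmul_eq_of_apply_eq_zero_on_torsion hB (ε := δ - δ₀)
      fun γ hnγ => by simp [hδ γ hnγ, hδ₀ γ hnγ]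
    exact ⟨γ, by rw [hγ, add_sub_cancel]⟩
  · rintro ⟨γ', rfl⟩ γ hnγ
    simp [hδ₀ γ hnγ, ← map_zsmul (B γ'), hnγ]

section QuadraticForm

variable {q : A → AddCircle (1 : ℚ)} (hBq : ∀ γ δ : A, B γ δ = q (γ + δ) - q γ - q δ)
include hBq

lemma zsmul_apply_add_of_zsmul_eq_zero {n : ℤ} {γ : A} (hγ : n • γ = 0) (δ : A) :
    n • q (γ + δ) = n • q γ + n • q δ := by
  have hn : n • B γ δ = 0 := by rw [← zsmul_apply, ← map_zsmul, hγ, map_zero, zero_apply]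
  rw [show q (γ + δ) = B γ δ + q γ + q δ by rw [hBq]; abel, smul_add, smul_add, hn, zero_add]

variable (hq : ∀ (k : ℤ) (γ : A), q (k • γ) = k ^ 2 • q γ)
include hq

lemma apply_two_zsmul_eq_two_zsmul_apply_self (β : A) : q ((2 : ℤ) • β) = (2 : ℤ) • B β β := by
  rw [hBq, ← two_zsmul, hq]
  abel

lemma zsmul_apply_two_zsmul_eq_zero {n : ℤ} {β : A} (hβ : n • (2 : ℤ) • β = 0) :
    n • q ((2 : ℤ) • β) = 0 := by
  rw [B.apply_two_zsmul_eq_two_zsmul_apply_self hBq hq, ← map_zsmul, ← map_zsmul, hβ, map_zero]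

lemma exists_mem_nStar_two_zsmul_eq_zero [Finite A] (hB : Injective B) (n : ℤ) :
    ∃ δ ∈ B.nStar q n, (2 : ℤ) • δ = 0 := by
  let χ : (zsmulAddGroupHom (α := A) n).ker →+ AddCircle (1 : ℚ) :=
    AddMonoidHom.mk' (fun γ => n • q γ) fun γ δ => B.zsmul_apply_add_of_zsmul_eq_zero hBq γ.2 δ
  obtain ⟨ψ, hψ2, hψ⟩ := CharacterModule.exists_two_torsion_extension χ fun γ β hβ => by
    have hnβ : n • (2 : ℤ) • β = 0 := hβ ▸ γ.2
    simpa [χ, ← hβ] using B.zsmul_apply_two_zsmul_eq_zero hBq hq hnβ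
  obtain ⟨δ, rfl⟩ := CharacterModule.surjective_of_injective hB ψ
  exact ⟨δ, fun γ hγ => DFunLike.congr_fun hψ ⟨γ, hγ⟩,
    hB <| by rw [map_zsmul, hψ2, map_zero]⟩

end QuadraticForm

end AddMonoidHom

theorem nStar_nonempty_coset_and_contains_two_torsion_general
    {A : Type*} [AddCommGroup A] [Fintype A]
    (q : A → AddCircle (1 : ℚ))
    (hq : ∀ (k : ℤ) (γ : A), q (k • γ) = k ^ 2 • q γ)
    (b : A → A → AddCircle (1 : ℚ))
    (hb : ∀ γ δ : A, b γ δ = q (γ + δ) - q γ - q δ)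
    (hb_add_right : ∀ γ δ₁ δ₂ : A, b γ (δ₁ + δ₂) = b γ δ₁ + b γ δ₂)
    (hnd : Function.Injective (fun δ : A => fun γ : A => b γ δ))
    (n : ℤ) :
    {δ : A | ∀ γ : A, n • γ = 0 → b γ δ = n • q γ}.Nonempty ∧
    (∀ δ₀ ∈ {δ : A | ∀ γ : A, n • γ = 0 → b γ δ = n • q γ},
      {δ : A | ∀ γ : A, n • γ = 0 → b γ δ = n • q γ} =
        {δ : A | ∃ γ : A, δ = δ₀ + n • γ}) ∧
    (∃ δ ∈ {δ : A | ∀ γ : A, n • γ = 0 → b γ δ = n • q γ}, (2 : ℤ) • δ = 0) := by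
  have hsymm (γ δ : A) : b γ δ = b δ γ := by rw [hb, hb, add_comm δ γ]; abel
  let B : A →+ A →+ AddCircle (1 : ℚ) :=
    AddMonoidHom.mk'
      (fun δ => AddMonoidHom.mk' (b · δ) fun γ₁ γ₂ => by simp only [hsymm _ δ, hb_add_right])
      fun δ₁ δ₂ => AddMonoidHom.ext fun γ => hb_add_right γ δ₁ δ₂
  have hB : Injective B := fun δ δ' h => hnd (congrArg DFunLike.coe h)
  have hBq (γ δ : A) : B γ δ = q (γ + δ) - q γ - q δ := (hsymm δ γ).trans (hb γ δ)
  obtain ⟨δ, hδ, h2δ⟩ := B.exists_mem_nStar_two_zsmul_eq_zero hBq hq hB n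
  exact ⟨⟨δ, hδ⟩, fun _ => B.nStar_eq_coset hB, δ, hδ, h2δ⟩

/-- Let `A` be a nondegenerate finite quadratic form and `n` an integer.
Then the set `A^{n*} = {δ | ∀ γ ∈ A_n, b γ δ = n • q γ}` is nonempty and is a coset of
`nA`, i.e. `A^{n*} = δ₀ + nA` for any `δ₀ ∈ A^{n*}`.  Moreover `A^{n*}` contains an
element `δ` with `2 • δ = 0`. -/
theorem nStar_nonempty_coset_and_contains_two_torsion
    {A : Type*} [AddCommGroup A] [Fintype A]
    (q : A → AddCircle (1 : ℚ))
    (hq : ∀ (k : ℤ) (γ : A), q (k • γ) = k ^ 2 • q γ)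
    (b : A → A → AddCircle (1 : ℚ))
    (hb : ∀ γ δ : A, b γ δ = q (γ + δ) - q γ - q δ)
    (hb_add_left : ∀ γ₁ γ₂ δ : A, b (γ₁ + γ₂) δ = b γ₁ δ + b γ₂ δ)
    (hb_add_right : ∀ γ δ₁ δ₂ : A, b γ (δ₁ + δ₂) = b γ δ₁ + b γ δ₂)
    (hnd : Function.Injective (fun δ : A => fun γ : A => b γ δ))
    (n : ℤ) :
    {δ : A | ∀ γ : A, n • γ = 0 → b γ δ = n • q γ}.Nonempty ∧
    (∀ δ₀ ∈ {δ : A | ∀ γ : A, n • γ = 0 → b γ δ = n • q γ},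
      {δ : A | ∀ γ : A, n • γ = 0 → b γ δ = n • q γ} =
        {δ : A | ∃ γ : A, δ = δ₀ + n • γ}) ∧
    (∃ δ ∈ {δ : A | ∀ γ : A, n • γ = 0 → b γ δ = n • q γ}, (2 : ℤ) • δ = 0) :=
  nStar_nonempty_coset_and_contains_two_torsion_general q hq b hb hb_add_right hnd n
end

section
/- Let N be a positive integer and let S be the set of matrices ((a,b),(c,d)) ∈ Γ0(N) with c > 0, d > 0, and d ≡ 1 (mod 4). If 4 does not divide N, then S generates Γ0(N) (so two group homomorphisms from Γ0(N) to an abelian group that agree on S are equal). For arbitrary N, the set S together with the matrix −I generates Γ0(N). -/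
/-!
Let `H` be the subgroup generated by `S = gamma0Pos N`. Right multiplication by `T ^ n` and by
`lowerUnipotent m` (with `N ∣ m`) changes the bottom row `(c, d)` of a matrix to `(c, d + c n)` and
`(c + d m, d)` respectively, and both kinds of matrices lie in `H`. As `c` and `d` are coprime, a
suitable `n` makes `d` odd, hence `± d ≡ 1 (mod 4)`, and a further shift by a multiple of `4 c`
makes it positive; then a large multiple `m` of `N` makes `c` positive. So every `A ∈ Γ₀(N)` has
`A ∈ H` or `-A ∈ H`. When `4 ∤ N`, the matrix `!![-1, -b; N, b N - 1]` with `b N ≡ 2 (mod 4)` lies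
in `Γ₀(N)` and has `a ≡ -1`, `d ≡ 1 (mod 4)`; for such `A` both `A` and `-A⁻¹` lie in `H`, so
`-1 = A * (-A⁻¹) ∈ H`.
-/

open Matrix MatrixGroups CongruenceSubgroup ModularGroup Matrix.SpecialLinearGroup

theorem IsCoprime.exists_odd_add_mul {c d : ℤ} (h : IsCoprime c d) : ∃ n, Odd (d + c * n) := by
  rcases Int.even_or_odd d with hd | hd
  · refine ⟨1, ?_⟩
    rw [mul_one]
    refine hd.add_odd (Int.not_even_iff_odd.1 fun hc => ?_)
    exact Int.prime_two.not_isUnit (h.isUnit_of_dvd' hc.two_dvd hd.two_dvd)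
  · exact ⟨0, by simpa using hd⟩

theorem IsCoprime.exists_pos_add_mul_modEq {c d : ℤ} (h : IsCoprime c d)
    (hd : d ≡ 1 [ZMOD 4]) : ∃ n, 0 < d + c * n ∧ d + c * n ≡ 1 [ZMOD 4] := by
  refine ⟨4 * c * (|d| + 1), ?_, ?_⟩
  · rcases eq_or_ne c 0 with rfl | hc
    · rcases Int.isUnit_iff.1 (isCoprime_zero_left.1 h) with rfl | rfl
      · simp
      · simp [Int.ModEq] at hd
    · have : 1 ≤ c * c := by nlinarith [mul_self_pos.2 hc]
      nlinarith [neg_abs_le d, abs_nonneg d]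
  · calc d + c * (4 * c * (|d| + 1)) = d + 4 * (c * c * (|d| + 1)) := by ring
      _ ≡ 1 [ZMOD 4] := by simpa [Int.ModEq] using hd

namespace ModularGroup

def lowerUnipotent (m : ℤ) : SL(2, ℤ) := ⟨!![1, 0; m, 1], by simp⟩

@[simp]
lemma coe_lowerUnipotent (m : ℤ) :
    (lowerUnipotent m : Matrix (Fin 2) (Fin 2) ℤ) = !![1, 0; m, 1] :=
  rfl

@[simp]
lemma mul_lowerUnipotent_apply_one_zero (A : SL(2, ℤ)) (m : ℤ) :
    (A * lowerUnipotent m) 1 0 = A 1 0 + A 1 1 * m := by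
  simp [Matrix.mul_apply]

@[simp]
lemma mul_lowerUnipotent_apply_one_one (A : SL(2, ℤ)) (m : ℤ) :
    (A * lowerUnipotent m) 1 1 = A 1 1 := by
  simp [Matrix.mul_apply]

@[simp]
lemma mul_T_zpow_apply_one_zero (A : SL(2, ℤ)) (n : ℤ) : (A * T ^ n) 1 0 = A 1 0 := by
  simp [Matrix.mul_apply, coe_T_zpow]

@[simp]
lemma mul_T_zpow_apply_one_one (A : SL(2, ℤ)) (n : ℤ) :
    (A * T ^ n) 1 1 = A 1 1 + A 1 0 * n := by
  simp [Matrix.mul_apply, coe_T_zpow, add_comm]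

end ModularGroup

namespace CongruenceSubgroup

lemma mem_Gamma0_iff_dvd {N : ℕ} {A : SL(2, ℤ)} : A ∈ Gamma0 N ↔ (N : ℤ) ∣ A 1 0 := by
  rw [Gamma0_mem, ZMod.intCast_zmod_eq_zero_iff_dvd]

def gamma0Pos (N : ℕ) : Set SL(2, ℤ) :=
  {A | A ∈ Gamma0 N ∧ 0 < A 1 0 ∧ 0 < A 1 1 ∧ A 1 1 ≡ 1 [ZMOD 4]}

variable {N : ℕ}

lemma closure_gamma0Pos_le : Subgroup.closure (gamma0Pos N) ≤ Gamma0 N :=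
  (Subgroup.closure_le _).2 fun _ hA => hA.1

lemma lowerUnipotent_mem_gamma0Pos {m : ℤ} (hm : 0 < m) (hNm : (N : ℤ) ∣ m) :
    lowerUnipotent m ∈ gamma0Pos N :=
  ⟨mem_Gamma0_iff_dvd.2 hNm, hm, one_pos, rfl⟩

lemma T_zpow_mem_closure_gamma0Pos (hN : 0 < N) (n : ℤ) :
    T ^ n ∈ Subgroup.closure (gamma0Pos N) := by
  refine zpow_mem ?_ n
  have hL : lowerUnipotent (4 * N) ∈ gamma0Pos N :=
    lowerUnipotent_mem_gamma0Pos (by omega) (dvd_mul_left _ _)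
  -- `lowerUnipotent (4 * N) * T = !![1, 1; 4 * N, 4 * N + 1]`
  have hLT : lowerUnipotent (4 * N) * T ∈ gamma0Pos N := by
    refine ⟨mem_Gamma0_iff_dvd.2 ?_, ?_, ?_, ?_⟩ <;> simp [Matrix.mul_apply, Int.ModEq, hN]
  simpa using mul_mem (inv_mem (Subgroup.subset_closure hL)) (Subgroup.subset_closure hLT)

lemma mem_closure_gamma0Pos_of_pos_of_modEq (hN : 0 < N) {A : SL(2, ℤ)} (hA : A ∈ Gamma0 N)
    (hd : 0 < A 1 1) (hd4 : A 1 1 ≡ 1 [ZMOD 4]) : A ∈ Subgroup.closure (gamma0Pos N) := by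
  set m : ℤ := (|A 1 0| + 1) * N
  have hm : 0 < m := by positivity
  have hL := lowerUnipotent_mem_gamma0Pos hm (dvd_mul_left _ _)
  have hAL : A * lowerUnipotent m ∈ gamma0Pos N := by
    refine ⟨mul_mem hA hL.1, ?_, by simpa using hd, by simpa using hd4⟩
    have : |A 1 0| + 1 ≤ m := le_mul_of_one_le_right (by positivity) (by exact_mod_cast hN)
    rw [mul_lowerUnipotent_apply_one_zero]
    nlinarith [neg_abs_le (A 1 0)]
  simpa using mul_mem (Subgroup.subset_closure hAL) (inv_mem (Subgroup.subset_closure hL))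

lemma mem_closure_gamma0Pos_of_modEq (hN : 0 < N) {A : SL(2, ℤ)} (hA : A ∈ Gamma0 N)
    (hd4 : A 1 1 ≡ 1 [ZMOD 4]) : A ∈ Subgroup.closure (gamma0Pos N) := by
  obtain ⟨n, hpos, hmod⟩ := (isCoprime_row A 1).exists_pos_add_mul_modEq hd4
  have hT := T_zpow_mem_closure_gamma0Pos hN n
  refine (mul_mem_cancel_right hT).1 ?_
  exact mem_closure_gamma0Pos_of_pos_of_modEq hN (mul_mem hA (closure_gamma0Pos_le hT))
    (by simpa using hpos) (by simpa using hmod)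

lemma mem_or_neg_mem_closure_gamma0Pos (hN : 0 < N) {A : SL(2, ℤ)} (hA : A ∈ Gamma0 N) :
    A ∈ Subgroup.closure (gamma0Pos N) ∨ -A ∈ Subgroup.closure (gamma0Pos N) := by
  obtain ⟨n, hodd⟩ := (isCoprime_row A 1).exists_odd_add_mul
  have hT := T_zpow_mem_closure_gamma0Pos hN n
  have hTG := closure_gamma0Pos_le hT
  have hA' : -A ∈ Gamma0 N := by simpa [coe_neg] using hA
  have hd := Int.odd_iff.1 hodd
  rw [← mul_mem_cancel_right hT, ← mul_mem_cancel_right (y := -A) hT]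
  rcases (by omega : (A 1 1 + A 1 0 * n) % 4 = 1 ∨ (A 1 1 + A 1 0 * n) % 4 = 3) with h | h
  · exact .inl (mem_closure_gamma0Pos_of_modEq hN (mul_mem hA hTG) (by simpa [Int.ModEq] using h))
  · refine .inr (mem_closure_gamma0Pos_of_modEq hN (mul_mem hA' hTG) ?_)
    rw [Int.ModEq, mul_T_zpow_apply_one_one]
    simp only [coe_neg, Matrix.neg_apply, neg_mul]
    omega

lemma neg_one_mem_closure_gamma0Pos_of_mem (hN : 0 < N) {A : SL(2, ℤ)} (hA : A ∈ Gamma0 N)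
    (ha : A 0 0 ≡ -1 [ZMOD 4]) (hd : A 1 1 ≡ 1 [ZMOD 4]) :
    -1 ∈ Subgroup.closure (gamma0Pos N) := by
  -- `-A⁻¹ = !![-d, b; c, -a]`
  have hA' : -A⁻¹ ∈ Subgroup.closure (gamma0Pos N) := by
    refine mem_closure_gamma0Pos_of_modEq hN ?_ ?_
    · simpa [coe_neg, coe_inv, Matrix.adjugate_fin_two] using hA
    · simp [coe_neg, coe_inv, Matrix.adjugate_fin_two, Int.ModEq] at ha ⊢
      omega
  simpa using mul_mem (mem_closure_gamma0Pos_of_modEq hN hA hd) hA'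

lemma neg_one_mem_closure_gamma0Pos (hN : 0 < N) (h4 : ¬ 4 ∣ N) :
    -1 ∈ Subgroup.closure (gamma0Pos N) := by
  obtain ⟨b, hb⟩ : ∃ b : ℤ, b * N ≡ 2 [ZMOD 4] := by
    rcases (by omega : (N : ℤ) % 4 = 1 ∨ (N : ℤ) % 4 = 2 ∨ (N : ℤ) % 4 = 3) with h | h | h
    exacts [⟨2, by unfold Int.ModEq; omega⟩, ⟨1, by unfold Int.ModEq; omega⟩,
      ⟨2, by unfold Int.ModEq; omega⟩]
  let A : SL(2, ℤ) := ⟨!![-1, -b; N, b * N - 1], by simp [Matrix.det_fin_two]⟩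
  refine neg_one_mem_closure_gamma0Pos_of_mem hN (A := A) (mem_Gamma0_iff_dvd.2 dvd_rfl) rfl ?_
  simpa [A] using hb.sub_right 1

end CongruenceSubgroup

/-- Let `N > 0` and let `S` be the set of matrices in `Γ₀(N)` with
`c > 0`, `d > 0` and `d ≡ 1 (mod 4)`.  If `4 ∤ N` then `S` generates `Γ₀(N)`; for
arbitrary `N`, `S` together with `-I` generates `Γ₀(N)`. -/
theorem Gamma0_generated_by_positive_entries (N : ℕ) (hN : 0 < N) :
    (¬ (4 ∣ N) →
      Subgroup.closure {A : SL(2, ℤ) | A ∈ Gamma0 N ∧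
          0 < A 1 0 ∧ 0 < A 1 1 ∧ A 1 1 ≡ 1 [ZMOD 4]} = Gamma0 N) ∧
    Subgroup.closure ({A : SL(2, ℤ) | A ∈ Gamma0 N ∧
          0 < A 1 0 ∧ 0 < A 1 1 ∧ A 1 1 ≡ 1 [ZMOD 4]} ∪ {(-1 : SL(2, ℤ))}) =
      Gamma0 N := by
  change (_ → Subgroup.closure (gamma0Pos N) = _) ∧ Subgroup.closure (gamma0Pos N ∪ {-1}) = _
  have hS := Subgroup.closure_mono (Set.subset_union_left (s := gamma0Pos N) (t := {-1}))
  have hunion : Subgroup.closure (gamma0Pos N ∪ {-1}) = Gamma0 N := by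
    refine le_antisymm ((Subgroup.closure_le _).2 ?_) fun A hA => ?_
    · rintro A (hA | rfl)
      exacts [hA.1, by simp]
    · have h1 : (-1 : SL(2, ℤ)) ∈ Subgroup.closure (gamma0Pos N ∪ {-1}) :=
        Subgroup.subset_closure (Set.mem_union_right _ (Set.mem_singleton _))
      rcases mem_or_neg_mem_closure_gamma0Pos hN hA with h | h
      · exact hS h
      · simpa using mul_mem h1 (hS h)
  refine ⟨fun h4 => le_antisymm closure_gamma0Pos_le ?_, hunion⟩
  refine hunion.symm.le.trans ((Subgroup.closure_le _).2 ?_)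
  exact Set.union_subset Subgroup.subset_closure
    (Set.singleton_subset_iff.2 (neg_one_mem_closure_gamma0Pos hN h4))
end

section
/- Let θ(τ) := ∑_{n ∈ ℤ} exp(2πi·n²·τ) for τ in the upper half-plane ℍ. For every matrix ((a,b),(c,d)) ∈ SL₂(ℤ) with 4 | c and d > 0, and every τ ∈ ℍ, θ((aτ+b)/(cτ+d)) = ε·√(cτ+d)·θ(τ), where ε = (c/d) if d ≡ 1 (mod 4) and ε = −i·(c/d) if d ≡ 3 (mod 4). Here (c/d) is the Jacobi symbol and √ is the principal branch of the square root. -/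
/-!
Jacobi's inversion formula `θ(-1/(4τ)) = √(-2iτ) θ(τ)` conjugates the translation `τ ↦ τ - m`
into `θ(τ/(4mτ+1)) = √(4mτ+1) θ(τ)`. Together with `θ(τ+1) = θ(τ)` this controls right
multiplication of a matrix with bottom row `(c, d)` by `T^n`, which moves `d` modulo `c`, and by
`V^m = !![1, 0; 4m, 1]`, which moves `c` modulo `4d`; negating the whole matrix lets `d` be
reduced to a representative of either sign. These moves give a Euclidean descent on `|c|` down to
`c = 0`. The multiplier `ε_d (c/d)` is compatible with each move: `(c/d)` depends only on `c`
mod `d`, and by quadratic reciprocity `b ↦ (a/b)` is a character modulo `4|a|` whose value at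
`-1` is `sign a`, which is what the negation costs through `√(-z) = ∓i √z`. The principal square
roots multiply as required because the arguments involved never add up beyond `±π`.
-/

open Matrix MatrixGroups

/-- `θ(z) = ∑_{n ∈ ℤ} exp (2 π i n² z)`. -/
noncomputable def stdTheta (z : ℂ) : ℂ :=
  ∑' n : ℤ, Complex.exp (2 * Real.pi * Complex.I * (n : ℂ) ^ 2 * z)

open Complex Real ZMod
open scoped NumberTheorySymbols

namespace Complex

theorem mul_cpow_of_arg_add_mem {x y : ℂ} (hx : x ≠ 0) (hy : y ≠ 0)
    (h : arg x + arg y ∈ Set.Ioc (-π) π) (s : ℂ) : (x * y) ^ s = x ^ s * y ^ s := by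
  rw [cpow_def_of_ne_zero (mul_ne_zero hx hy), cpow_def_of_ne_zero hx, cpow_def_of_ne_zero hy,
    log_mul hx hy h, add_mul, Complex.exp_add]

theorem mul_cpow_of_re_pos {x y : ℂ} (hx : 0 < x.re) (hy : 0 < y.re) (s : ℂ) :
    (x * y) ^ s = x ^ s * y ^ s := by
  have hx' := abs_lt.1 (abs_arg_lt_pi_div_two_iff.2 (Or.inl hx))
  have hy' := abs_lt.1 (abs_arg_lt_pi_div_two_iff.2 (Or.inl hy))
  exact mul_cpow_of_arg_add_mem (fun h => by simp [h] at hx) (fun h => by simp [h] at hy)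
    ⟨by linarith, by linarith⟩ s

theorem im_mul_eq_norm_mul_norm_mul_sin (x y : ℂ) :
    (x * y).im = ‖x‖ * ‖y‖ * Real.sin (arg x + arg y) := by
  rw [Real.sin_add, mul_im, ← norm_mul_cos_arg x, ← norm_mul_sin_arg x, ← norm_mul_cos_arg y,
    ← norm_mul_sin_arg y]
  ring

theorem arg_add_arg_lt_pi_of_im_mul_pos {x y : ℂ} (h : 0 < (x * y).im) :
    arg x + arg y < π := by
  by_contra! hπ
  have hsin : Real.sin (arg x + arg y) ≤ 0 := by
    rw [← Real.sin_sub_two_pi]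
    exact sin_nonpos_of_nonpos_of_neg_pi_le (by linarith [arg_le_pi x, arg_le_pi y]) (by linarith)
  have := im_mul_eq_norm_mul_norm_mul_sin x y ▸ h
  nlinarith [mul_nonneg (norm_nonneg x) (norm_nonneg y)]

theorem neg_pi_lt_arg_add_arg_of_im_mul_neg {x y : ℂ} (h : (x * y).im < 0) :
    -π < arg x + arg y := by
  by_contra! hπ
  have hsin : 0 ≤ Real.sin (arg x + arg y) := by
    rw [← Real.sin_add_two_pi]
    exact sin_nonneg_of_nonneg_of_le_pi (by linarith [neg_pi_lt_arg x, neg_pi_lt_arg y])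
      (by linarith)
  have := im_mul_eq_norm_mul_norm_mul_sin x y ▸ h
  nlinarith [mul_nonneg (norm_nonneg x) (norm_nonneg y)]

theorem arg_nonpos_of_mem_slitPlane {z : ℂ} (hz : z ∈ slitPlane) (h : z.im ≤ 0) :
    arg z ≤ 0 := by
  rcases h.lt_or_eq with h | h
  · exact (arg_neg_iff.2 h).le
  · exact (arg_eq_zero_iff.2 ⟨(mem_slitPlane_iff.1 hz).resolve_right (· h) |>.le, h⟩).le

theorem arg_lt_pi_of_mem_slitPlane {z : ℂ} (hz : z ∈ slitPlane) : arg z < π :=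
  lt_of_le_of_ne (arg_le_pi z) (slitPlane_arg_ne_pi hz)

theorem arg_add_arg_mem_Ioc {x y : ℂ} (hx : x ∈ slitPlane) (hy : y ∈ slitPlane)
    (h : x.im * y.im ≤ 0 ∨ 0 < x.im * (x * y).im ∧ 0 < y.im * (x * y).im) :
    arg x + arg y ∈ Set.Ioc (-π) π := by
  have := neg_pi_lt_arg x; have := neg_pi_lt_arg y
  have := arg_lt_pi_of_mem_slitPlane hx; have := arg_lt_pi_of_mem_slitPlane hy
  rcases h with h | ⟨hx', hy'⟩
  · rcases mul_nonpos_iff.1 h with ⟨hx0, hy0⟩ | ⟨hx0, hy0⟩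
    · have := arg_nonneg_iff.2 hx0; have := arg_nonpos_of_mem_slitPlane hy hy0
      constructor <;> linarith
    · have := arg_nonneg_iff.2 hy0; have := arg_nonpos_of_mem_slitPlane hx hx0
      constructor <;> linarith
  · rcases lt_trichotomy (x * y).im 0 with hxy | hxy | hxy
    · have := arg_neg_iff.2 (neg_of_mul_pos_left hx' hxy.le)
      have := arg_neg_iff.2 (neg_of_mul_pos_left hy' hxy.le)
      exact ⟨neg_pi_lt_arg_add_arg_of_im_mul_neg hxy, by linarith⟩
    · simp [hxy] at hx'
    · have := arg_nonneg_iff.2 (pos_of_mul_pos_left hx' hxy.le).le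
      have := arg_nonneg_iff.2 (pos_of_mul_pos_left hy' hxy.le).le
      exact ⟨by linarith, (arg_add_arg_lt_pi_of_im_mul_pos hxy).le⟩

theorem neg_cpow_one_half {z : ℂ} (hz : z.im < 0) :
    (-z) ^ (1 / 2 : ℂ) = I * z ^ (1 / 2 : ℂ) := by
  have hz0 : z ≠ 0 := fun h => by simp [h] at hz
  have harg : arg z + arg (-1) ∈ Set.Ioc (-π) π := by
    rw [arg_neg_one]
    constructor <;> linarith [arg_neg_iff.2 hz, neg_pi_lt_arg z]
  rw [← mul_neg_one, mul_cpow_of_arg_add_mem hz0 (by norm_num) harg, mul_comm,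
    cpow_def_of_ne_zero (by norm_num), log_neg_one,
    show (π : ℂ) * I * (1 / 2) = π / 2 * I by ring, exp_pi_div_two_mul_I]

end Complex

theorem Int.exists_dvd_sub_natAbs_two_mul_le (x : ℤ) {y : ℤ} (hy : y ≠ 0) :
    ∃ r, y ∣ x - r ∧ (2 * r).natAbs ≤ y.natAbs := by
  have hm : 0 < y.natAbs := Int.natAbs_pos.2 hy
  refine ⟨Int.bmod x y.natAbs, ?_, ?_⟩
  · rw [← dvd_neg, neg_sub, ← Int.natAbs_dvd]; exact Int.dvd_bmod_sub_self
  · have := Int.le_bmod (x := x) hm; have := Int.bmod_lt (x := x) hm; omega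

namespace ZMod

theorem χ₄_nat_eq_neg_of_four_dvd_add {D d : ℕ} (h : 4 ∣ D + d) : χ₄ D = -χ₄ d := by
  have hD : (D : ZMod 4) = -d :=
    eq_neg_of_add_eq_zero_left (by exact_mod_cast (natCast_eq_zero_iff (D + d) 4).2 h)
  rw [hD]
  generalize (d : ZMod 4) = x
  revert x; decide

theorem χ₈_nat_eq_of_eight_dvd_add {D d : ℕ} (h : 8 ∣ D + d) : χ₈ D = χ₈ d := by
  have hD : (D : ZMod 8) = -d :=
    eq_neg_of_add_eq_zero_left (by exact_mod_cast (natCast_eq_zero_iff (D + d) 8).2 h)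
  rw [hD]
  generalize (d : ZMod 8) = x
  revert x; decide

theorem χ₄_nat_sq_of_odd {n : ℕ} (hn : Odd n) : χ₄ n ^ 2 = 1 := by
  rw [χ₄_eq_neg_one_pow (Nat.odd_iff.1 hn), ← pow_mul, mul_comm, pow_mul, neg_one_sq, one_pow]

end ZMod

namespace jacobiSym

theorem odd_natCast_eq_of_dvd_add {u D d : ℕ} (hu : Odd u) (hD : Odd D) (hd : Odd d)
    (h4 : 4 ∣ D + d) (hdvd : u ∣ D + d) : J(u | D) = J(u | d) := by
  have hsign : qrSign D u = χ₄ u * qrSign d u := by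
    rw [qrSign, qrSign, χ₄_nat_eq_neg_of_four_dvd_add h4, jacobiSym.neg _ hu]
  have hflip : J(D | u) = χ₄ u * J(d | u) := by
    rw [← jacobiSym.neg _ hu]
    refine mod_left' (Int.modEq_iff_dvd.2 ?_).symm
    rw [sub_neg_eq_add]
    exact_mod_cast hdvd
  rw [quadratic_reciprocity' hu hD, quadratic_reciprocity' hu hd, hsign,
    hflip, mul_mul_mul_comm, ← sq, χ₄_nat_sq_of_odd hu, one_mul]

theorem natCast_eq_of_dvd_add (a : ℕ) {D d : ℕ} (hD : Odd D) (hd : Odd d)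
    (h : 4 * a ∣ D + d) : J(a | D) = J(a | d) := by
  have ha : a ≠ 0 := right_ne_zero_of_mul (ne_zero_of_dvd_ne_zero (by have := hD.pos; omega) h)
  obtain ⟨e, u, hu, rfl⟩ := Nat.exists_eq_two_pow_mul_odd ha
  have h4 : 4 ∣ D + d := dvd_trans (dvd_mul_right 4 _) h
  have hu' : u ∣ D + d := (dvd_mul_left u _).trans ((dvd_mul_left _ 4).trans h)
  simp only [Nat.cast_mul, Nat.cast_pow, Nat.cast_ofNat, mul_left, pow_left,
    odd_natCast_eq_of_dvd_add hu hD hd h4 hu']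
  rcases e with _ | e
  · simp
  · rw [at_two hD, at_two hd,
      χ₈_nat_eq_of_eight_dvd_add ((Dvd.intro (2 ^ e * u) (by ring)).trans h)]

theorem eq_sign_mul_of_dvd_add (a : ℤ) {D d : ℕ} (hD : Odd D) (hd : Odd d)
    (h : 4 * a ∣ D + d) : J(a | D) = a.sign * J(a | d) := by
  obtain ⟨n, rfl | rfl⟩ := Int.eq_nat_or_neg a
  all_goals
    have hn : 4 * n ∣ D + d := by exact_mod_cast (by simpa using h : (4 * n : ℤ) ∣ D + d)
    have hn0 : n ≠ 0 :=
      right_ne_zero_of_mul (ne_zero_of_dvd_ne_zero (by have := hD.pos; omega) hn)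
  · rw [Int.sign_natCast_of_ne_zero hn0, one_mul, natCast_eq_of_dvd_add n hD hd hn]
  · rw [jacobiSym.neg _ hD, jacobiSym.neg _ hd, Int.sign_neg, Int.sign_natCast_of_ne_zero hn0,
      natCast_eq_of_dvd_add n hD hd hn,
      χ₄_nat_eq_neg_of_four_dvd_add ((dvd_mul_right 4 n).trans hn)]
    ring

theorem eq_of_dvd_sub (a : ℤ) {D d : ℕ} (hD : Odd D) (hd : Odd d)
    (h : 4 * a ∣ (D : ℤ) - d) : J(a | D) = J(a | d) := by
  rw [mod_right a hD, mod_right a hd]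
  congr 1
  refine (Nat.modEq_iff_dvd.2 ?_).symm
  rw [Int.natCast_dvd]
  simpa [Int.natAbs_mul] using Int.natAbs_dvd_natAbs.2 h

theorem four_mul_left (a : ℤ) {b : ℕ} (hb : Odd b) : J(4 * a | b) = J(a | b) := by
  rw [mul_left, at_four hb, one_mul]

end jacobiSym

noncomputable def thetaMultiplier (c d : ℤ) : ℂ :=
  if d % 4 = 1 then (J(c | d.natAbs) : ℂ) else -I * J(c | d.natAbs)

theorem thetaMultiplier_eq_of_dvd_sub_right {c d d' : ℤ} (hc : 4 ∣ c) (hd : 0 < d)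
    (hd' : 0 < d') (hodd : Odd d) (h : c ∣ d' - d) :
    thetaMultiplier c d' = thetaMultiplier c d := by
  obtain ⟨a, rfl⟩ := hc
  have h4 : d' % 4 = d % 4 := by have := (dvd_mul_right 4 a).trans h; omega
  have hodd' : Odd d' := by rw [Int.odd_iff] at hodd ⊢; omega
  lift d to ℕ using hd.le
  lift d' to ℕ using hd'.le
  replace hodd : Odd d := by exact_mod_cast hodd
  replace hodd' : Odd d' := by exact_mod_cast hodd'
  simp only [thetaMultiplier, Int.natAbs_natCast, h4]
  rw [jacobiSym.four_mul_left a hodd, jacobiSym.four_mul_left a hodd',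
    jacobiSym.eq_of_dvd_sub a hodd' hodd h]

theorem thetaMultiplier_eq_of_dvd_sub_left {c c' d : ℤ} (hd : 0 < d) (h : d ∣ c' - c) :
    thetaMultiplier c' d = thetaMultiplier c d := by
  have hmod : c ≡ c' [ZMOD d.natAbs] := Int.modEq_iff_dvd.2 (by rwa [Int.natAbs_of_nonneg hd.le])
  rw [thetaMultiplier, thetaMultiplier, jacobiSym.mod_left' hmod.symm]

theorem thetaMultiplier_neg_mul {c d D : ℤ} (hc : 4 ∣ c) (hd : 0 < d) (hD : 0 < D)
    (hodd : Odd d) (h : c ∣ D + d) :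
    thetaMultiplier (-c) D * ((-c).sign * I) = thetaMultiplier c d := by
  obtain ⟨a, rfl⟩ := hc
  lift d to ℕ using hd.le
  lift D to ℕ using hD.le
  replace hodd : Odd d := by exact_mod_cast hodd
  have h4 : 4 ∣ D + d := by exact_mod_cast (dvd_mul_right 4 a).trans h
  have hDodd : Odd D := by rw [Nat.odd_iff] at hodd ⊢; omega
  have ha : a ≠ 0 := by rintro rfl; simp only [mul_zero, zero_dvd_iff] at h; omega
  have hsign : (a.sign : ℂ) * a.sign = 1 := by
    have : a.sign * a.sign = 1 := by
      rw [← Int.natAbs_mul_self', Int.natAbs_sign_of_ne_zero ha]; rfl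
    exact_mod_cast this
  have hJ : J(-(4 * a) | D) = -χ₄ d * a.sign * J(4 * a | d) := by
    rw [jacobiSym.neg _ hDodd, jacobiSym.four_mul_left a hDodd, jacobiSym.four_mul_left a hodd,
      jacobiSym.eq_sign_mul_of_dvd_add a hDodd hodd h, χ₄_nat_eq_neg_of_four_dvd_add h4,
      mul_assoc]
  simp only [thetaMultiplier, Int.natAbs_natCast, hJ, Int.sign_neg, Int.sign_mul,
    show Int.sign 4 = 1 from rfl, one_mul]
  rcases Nat.odd_mod_four_iff.1 (Nat.odd_iff.1 hodd) with hd4 | hd4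
  · rw [if_neg (by omega), if_pos (by omega), χ₄_nat_one_mod_four hd4]
    push_cast
    linear_combination
      (-(a.sign * a.sign * J(4 * a | d) : ℂ)) * I_mul_I + (J(4 * a | d) : ℂ) * hsign
  · rw [if_pos (by omega), if_neg (by omega), χ₄_nat_three_mod_four hd4]
    push_cast
    linear_combination (-(I * J(4 * a | d) : ℂ)) * hsign

theorem stdTheta_eq_jacobiTheta (z : ℂ) : stdTheta z = jacobiTheta (2 * z) :=
  tsum_congr fun n => by ring_nf

theorem stdTheta_add_intCast (z : ℂ) (n : ℤ) : stdTheta (z + n) = stdTheta z := by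
  refine tsum_congr fun k => ?_
  have : (2 : ℂ) * π * I * k ^ 2 * n = (k ^ 2 * n : ℤ) * (2 * π * I) := by push_cast; ring
  rw [mul_add, Complex.exp_add, this, exp_int_mul_two_pi_mul_I, mul_one]

theorem stdTheta_neg_one_div_four_mul {z : ℂ} (hz : 0 < z.im) :
    stdTheta (-1 / (4 * z)) = (-2 * I * z) ^ (1 / 2 : ℂ) * stdTheta z := by
  have h := jacobiTheta_S_smul ⟨2 * z, by simpa using hz⟩
  rw [UpperHalfPlane.modular_S_smul, UpperHalfPlane.coe_mk] at h
  rw [stdTheta_eq_jacobiTheta, stdTheta_eq_jacobiTheta,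
    show 2 * (-1 / (4 * z)) = (-(2 * z))⁻¹ by field_simp; ring]
  convert h using 3
  ring

theorem stdTheta_div_four_mul_add_one {z : ℂ} (hz : 0 < z.im) (m : ℤ) :
    stdTheta (z / (4 * m * z + 1)) = (4 * m * z + 1) ^ (1 / 2 : ℂ) * stdTheta z := by
  have hz0 : z ≠ 0 := fun h => by simp [h] at hz
  set w := -1 / (4 * z) - m with hw
  have hw_im : 0 < w.im := by
    rw [hw, sub_im, intCast_im, sub_zero, neg_div, one_div, ← inv_neg]
    exact UpperHalfPlane.im_inv_neg_coe_pos ⟨4 * z, by simpa using hz⟩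
  have hw0 : w ≠ 0 := fun h => by simp [h] at hw_im
  have hwz : 4 * m * z + 1 = -(4 * w * z) := by rw [hw]; field_simp; ring
  calc stdTheta (z / (4 * m * z + 1))
      = stdTheta (-1 / (4 * w)) := by rw [hwz]; field_simp
    _ = (-2 * I * w) ^ (1 / 2 : ℂ) * (-2 * I * z) ^ (1 / 2 : ℂ) * stdTheta z := by
      rw [stdTheta_neg_one_div_four_mul hw_im, hw, ← stdTheta_add_intCast _ m, sub_add_cancel,
        stdTheta_neg_one_div_four_mul hz, ← mul_assoc]
    _ = (4 * m * z + 1) ^ (1 / 2 : ℂ) * stdTheta z := by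
      rw [← mul_cpow_of_re_pos (by simpa using hw_im) (by simpa using hz)]
      congr 2
      rw [hw]; field_simp
      linear_combination (-4 - 16 * z * m) * I_mul_I

def ThetaTransforms (a b c d : ℤ) (ε : ℂ) : Prop :=
  ∀ τ : ℂ, 0 < τ.im →
    stdTheta ((a * τ + b) / (c * τ + d)) = ε * (c * τ + d) ^ (1 / 2 : ℂ) * stdTheta τ

theorem intCast_mul_add_im (c d : ℤ) (τ : ℂ) : ((c : ℂ) * τ + d).im = c * τ.im := by simp

theorem intCast_mul_add_mem_slitPlane (c : ℤ) {d : ℤ} (hd : 0 < d) {τ : ℂ} (hτ : 0 < τ.im) :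
    (c : ℂ) * τ + d ∈ slitPlane := by
  rcases eq_or_ne c 0 with rfl | hc
  · exact mem_slitPlane_iff.2 (Or.inl (by simpa using hd))
  · exact mem_slitPlane_iff.2 (Or.inr (by simp [hc, hτ.ne']))

theorem div_four_mul_add_one_im_pos (m : ℤ) {τ : ℂ} (hτ : 0 < τ.im) :
    0 < (τ / (4 * m * τ + 1)).im := by
  have hw : (4 * m * τ + 1 : ℂ) ≠ 0 := slitPlane_ne_zero (by
    simpa using intCast_mul_add_mem_slitPlane (4 * m) one_pos hτ)
  have : (τ / (4 * m * τ + 1)).im = τ.im / normSq (4 * m * τ + 1) := by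
    simp only [div_im, add_re, mul_re, re_ofNat, intCast_re, im_ofNat, intCast_im, mul_zero,
      sub_zero, mul_im, zero_mul, add_zero, one_re, add_im, one_im]
    ring
  rw [this]
  exact div_pos hτ (normSq_pos.2 hw)

/-- The cocycle relation `j(MV, τ) = j(M, Vτ) j(V, τ)` of `j(M, τ) = cτ + d`, for
`V = !![1, 0; 4m, 1]`, survives taking principal powers. -/
theorem cpow_denom_comp_V (c m : ℤ) {d : ℤ} (hd : 0 < d) {τ : ℂ} (hτ : 0 < τ.im) (s : ℂ) :
    (((c + 4 * m * d : ℤ) : ℂ) * τ + d) ^ s =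
      ((c : ℂ) * (τ / (4 * m * τ + 1)) + d) ^ s * (4 * m * τ + 1) ^ s := by
  set w : ℂ := 4 * m * τ + 1 with hw
  set τ' := τ / w with hτ'_def
  have hτ' : 0 < τ'.im := div_four_mul_add_one_im_pos m hτ
  have hw_slit : w ∈ slitPlane := by
    simpa [hw] using intCast_mul_add_mem_slitPlane (4 * m) one_pos hτ
  have hx_slit := intCast_mul_add_mem_slitPlane c hd hτ'
  have hxw : (c * τ' + d) * w = ((c + 4 * m * d : ℤ) : ℂ) * τ + d := by
    rw [hτ'_def]; field_simp [slitPlane_ne_zero hw_slit]; push_cast; ring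
  rw [← hxw]
  refine mul_cpow_of_arg_add_mem (slitPlane_ne_zero hx_slit) (slitPlane_ne_zero hw_slit)
    (arg_add_arg_mem_Ioc hx_slit hw_slit ?_) s
  rw [hxw, intCast_mul_add_im, intCast_mul_add_im, show w.im = 4 * m * τ.im by simp [hw]]
  push_cast
  have hττ' := mul_pos hτ' hτ
  rcases le_or_gt (c * m) 0 with hcm | hcm
  · have : (c : ℝ) * m ≤ 0 := by exact_mod_cast hcm
    left; nlinarith
  · have h1 : (0 : ℝ) < c * (c + 4 * m * d) := by
      exact_mod_cast (by nlinarith [sq_nonneg c, mul_pos hcm hd] : 0 < c * (c + 4 * m * d))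
    have h2 : (0 : ℝ) < m * (c + 4 * m * d) := by
      exact_mod_cast (by nlinarith [mul_nonneg (sq_nonneg m) hd.le] : 0 < m * (c + 4 * m * d))
    right; constructor <;> nlinarith [mul_pos h1 hττ', mul_pos h2 (mul_pos hτ hτ)]

namespace ThetaTransforms

variable {a b c d : ℤ} {ε : ℂ}

theorem comp_T (h : ThetaTransforms a b c d ε) (n : ℤ) :
    ThetaTransforms a (a * n + b) c (c * n + d) ε := by
  intro τ hτ
  have hnum : (a : ℂ) * (τ + n) + b = a * τ + ((a * n + b : ℤ) : ℂ) := by push_cast; ring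
  have hden : (c : ℂ) * (τ + n) + d = c * τ + ((c * n + d : ℤ) : ℂ) := by push_cast; ring
  simpa only [hnum, hden, stdTheta_add_intCast] using h (τ + n) (by simpa using hτ)

theorem comp_V (h : ThetaTransforms a b c d ε) (hd : 0 < d) (m : ℤ) :
    ThetaTransforms (a + 4 * m * b) b (c + 4 * m * d) d ε := by
  intro τ hτ
  set w : ℂ := 4 * m * τ + 1 with hw_def
  have hw : w ≠ 0 := slitPlane_ne_zero (by
    simpa [hw_def] using intCast_mul_add_mem_slitPlane (4 * m) one_pos hτ)
  have hnum : (a : ℂ) * (τ / w) + b = (((a + 4 * m * b : ℤ) : ℂ) * τ + b) / w := by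
    field_simp; rw [hw_def]; push_cast; ring
  have hden : (c : ℂ) * (τ / w) + d = (((c + 4 * m * d : ℤ) : ℂ) * τ + d) / w := by
    field_simp; rw [hw_def]; push_cast; ring
  calc stdTheta ((((a + 4 * m * b : ℤ) : ℂ) * τ + b) / (((c + 4 * m * d : ℤ) : ℂ) * τ + d))
      = stdTheta ((a * (τ / w) + b) / (c * (τ / w) + d)) := by
        rw [hnum, hden, div_div_div_cancel_right₀ hw]
    _ = ε * (((c + 4 * m * d : ℤ) : ℂ) * τ + d) ^ (1 / 2 : ℂ) * stdTheta τ := by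
      rw [h _ (div_four_mul_add_one_im_pos m hτ), stdTheta_div_four_mul_add_one hτ,
        cpow_denom_comp_V c m hd hτ]
      ring

theorem neg (h : ThetaTransforms a b c d ε) (hc : c ≠ 0) :
    ThetaTransforms (-a) (-b) (-c) (-d) (ε * (c.sign * I)) := by
  intro τ hτ
  set z : ℂ := c * τ + d with hz
  have hz_im : z.im = c * τ.im := intCast_mul_add_im c d τ
  have hroot : z ^ (1 / 2 : ℂ) = c.sign * I * (-z) ^ (1 / 2 : ℂ) := by
    rcases hc.lt_or_gt with hc | hc
    · have : z.im < 0 := by rw [hz_im]; exact mul_neg_of_neg_of_pos (by exact_mod_cast hc) hτ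
      rw [neg_cpow_one_half this, Int.sign_eq_neg_one_of_neg hc]
      push_cast
      linear_combination z ^ (1 / 2 : ℂ) * I_mul_I
    · have : (-z).im < 0 := by
        rw [neg_im, hz_im, neg_lt_zero]; exact mul_pos (by exact_mod_cast hc) hτ
      rw [Int.sign_eq_one_of_pos hc, Int.cast_one, one_mul, ← neg_cpow_one_half this, neg_neg]
  have hnum : ((-a : ℤ) : ℂ) * τ + ((-b : ℤ) : ℂ) = -(a * τ + b) := by push_cast; ring
  have hden : ((-c : ℤ) : ℂ) * τ + ((-d : ℤ) : ℂ) = -z := by push_cast; ring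
  rw [hnum, hden, neg_div_neg_eq, h τ hτ, hroot]
  ring

end ThetaTransforms

def ThetaTransformsForRow (c d : ℤ) : Prop :=
  ∀ a b : ℤ, a * d - b * c = 1 → ThetaTransforms a b c d (thetaMultiplier c d)

namespace ThetaTransformsForRow

theorem of_dvd_sub_left {c c' d : ℤ} (h : ThetaTransformsForRow c d) (hd : 0 < d)
    (hc : 4 * d ∣ c' - c) : ThetaTransformsForRow c' d := by
  rw [ThetaTransformsForRow,
    thetaMultiplier_eq_of_dvd_sub_left hd ((dvd_mul_left d 4).trans hc)]
  obtain ⟨m, hm⟩ := hc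
  obtain rfl : c' = c + 4 * m * d := by linear_combination hm
  intro a b hdet
  have := (h (a - 4 * m * b) b (by linear_combination hdet)).comp_V hd m
  rwa [sub_add_cancel] at this

theorem of_dvd_sub_right {c d d' : ℤ} (h : ThetaTransformsForRow c d) (hc : 4 ∣ c)
    (hd : 0 < d) (hd' : 0 < d') (hodd : Odd d) (hdd : c ∣ d' - d) :
    ThetaTransformsForRow c d' := by
  rw [ThetaTransformsForRow, thetaMultiplier_eq_of_dvd_sub_right hc hd hd' hodd hdd]
  obtain ⟨n, hn⟩ := hdd
  obtain rfl : d' = c * n + d := by linear_combination hn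
  intro a b hdet
  have := (h a (b - a * n) (by linear_combination hdet)).comp_T n
  rwa [add_sub_cancel] at this

theorem of_neg {c d D : ℤ} (h : ThetaTransformsForRow (-c) D) (hc : 4 ∣ c) (hd : 0 < d)
    (hD : 0 < D) (hodd : Odd d) (hdD : c ∣ D + d) : ThetaTransformsForRow c d := by
  rw [ThetaTransformsForRow, ← thetaMultiplier_neg_mul hc hd hD hodd hdD]
  obtain ⟨n, hn⟩ := hdD
  have hc0 : c ≠ 0 := by rintro rfl; simp only [zero_mul] at hn; omega
  obtain rfl : D = c * n - d := by linear_combination hn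
  intro a b hdet
  have := ((h (-a) (a * n - b) (by linear_combination hdet)).comp_T n).neg (neg_ne_zero.2 hc0)
  convert this using 2 <;> ring

end ThetaTransformsForRow

theorem thetaTransformsForRow_zero {d : ℤ} (hd : 0 < d) : ThetaTransformsForRow 0 d := by
  intro a b hdet
  obtain rfl : d = 1 := Int.eq_one_of_mul_eq_one_left hd.le (by simpa using hdet)
  obtain rfl : a = 1 := by linarith
  intro τ hτ
  simp [thetaMultiplier, stdTheta_add_intCast]

theorem thetaTransformsForRow (c d : ℤ) (hc : 4 ∣ c) (hd : 0 < d) (hodd : Odd d) :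
    ThetaTransformsForRow c d := by
  induction hk : c.natAbs using Nat.strong_induction_on generalizing c d with
  | _ k ih =>
  rcases eq_or_ne c 0 with rfl | hc0
  · exact thetaTransformsForRow_zero hd
  obtain ⟨d₁, hdd₁, hd₁⟩ := Int.exists_dvd_sub_natAbs_two_mul_le d hc0
  have h2 : 2 ∣ d - d₁ := (dvd_trans (by norm_num) hc).trans hdd₁
  have hd₁odd : Odd d₁ := by rw [Int.odd_iff] at hodd ⊢; omega
  have hd₁2 := Int.odd_iff.1 hd₁odd
  -- strict because `d₁` is odd and `4 ∣ c`; reducing `±c` modulo `4 |d₁|` then gives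
  -- `|C| ≤ 2 |d₁| < |c|`
  have hlt : 2 * d₁.natAbs < k := by omega
  rcases lt_or_gt_of_ne (show d₁ ≠ 0 by omega) with hneg | hpos
  · obtain ⟨C, hC, hCle⟩ :=
      Int.exists_dvd_sub_natAbs_two_mul_le (-c) (show 4 * -d₁ ≠ 0 by omega)
    have hC4 : 4 ∣ C := by have := (dvd_mul_right 4 (-d₁)).trans hC; omega
    have hrow := ih C.natAbs (by omega) C (-d₁) hC4 (by omega) (by simpa using hd₁odd) rfl
    refine (hrow.of_dvd_sub_left (by omega) hC).of_neg hc hd (by omega) hodd ?_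
    rwa [neg_add_eq_sub]
  · obtain ⟨C, hC, hCle⟩ := Int.exists_dvd_sub_natAbs_two_mul_le c (show 4 * d₁ ≠ 0 by omega)
    have hC4 : 4 ∣ C := by have := (dvd_mul_right 4 d₁).trans hC; omega
    have hrow := ih C.natAbs (by omega) C d₁ hC4 hpos hd₁odd rfl
    exact (hrow.of_dvd_sub_left hpos hC).of_dvd_sub_right hc hpos hd hd₁odd hdd₁

/-- For `((a,b),(c,d)) ∈ SL₂(ℤ)` with `4 ∣ c` and `d > 0`, and `τ ∈ ℍ`,
`θ((aτ+b)/(cτ+d)) = ε √(cτ+d) θ(τ)`, where `ε = (c/d)` if `d ≡ 1 (mod 4)` and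
`ε = -i (c/d)` if `d ≡ 3 (mod 4)`, `(c/d)` being the Jacobi symbol and `√` the
principal branch of the square root. -/
theorem stdTheta_transform (M : SL(2, ℤ)) (hc : (4 : ℤ) ∣ M 1 0) (hd : 0 < M 1 1)
    (τ : UpperHalfPlane) :
    stdTheta ((((M 0 0 : ℤ) : ℂ) * (τ : ℂ) + ((M 0 1 : ℤ) : ℂ)) /
        (((M 1 0 : ℤ) : ℂ) * (τ : ℂ) + ((M 1 1 : ℤ) : ℂ))) =
      (if (M 1 1 : ℤ) % 4 = 1 then ((jacobiSym (M 1 0) (M 1 1).natAbs : ℤ) : ℂ)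
        else -Complex.I * ((jacobiSym (M 1 0) (M 1 1).natAbs : ℤ) : ℂ)) *
      (((M 1 0 : ℤ) : ℂ) * (τ : ℂ) + ((M 1 1 : ℤ) : ℂ)) ^ ((1 : ℂ) / 2) *
      stdTheta (τ : ℂ) := by
  have hdet : M 0 0 * M 1 1 - M 0 1 * M 1 0 = 1 := by
    have := M.det_coe
    rwa [Matrix.det_fin_two] at this
  have hodd : Odd (M 1 1) := by
    obtain ⟨k, hk⟩ := hc
    have : Odd (M 0 0 * M 1 1) := ⟨2 * k * M 0 1, by linear_combination hdet + M 0 1 * hk⟩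
    exact (Int.odd_mul.1 this).2
  exact thetaTransformsForRow _ _ hc hd hodd _ _ hdet τ τ.im_pos
end

section
/- Let V be a finite-dimensional complex vector space, let N be a positive integer, and let X and g be commuting endomorphisms of V with X^N = id_V. For 0 ≤ k < N let V_k denote the eigenspace of X for the eigenvalue e(−k/N) = exp(−2πik/N) (so V = ⊕_{0≤k<N} V_k and each V_k is g-invariant). Then ∑_{0≤k<N} (1/2 − k/N)·Tr(g|_{V_k}) = Tr(g)/(2N) + (1/N)·∑_{0<j<N} Tr(X^j·g)/(1 − e(j/N)), where e(x) := exp(2πix). -/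
/-!
Since `X ^ N = 1`, `X` is diagonalisable with eigenvalues `ζ⁻¹ ^ k` (`ζ = e(1/N)`, `0 ≤ k < N`)
and `g` preserves each eigenspace, so `Tr(X^j g) = ∑ₖ ζ^(-kj) Tr(g|V_k)`. Comparing coefficients
of `Tr(g|V_k)`, the theorem reduces to the scalar identity
`∑_{0<j<N} ζ^(-kj) / (1 - ζ^j) = (N - 1)/2 - k`. For `k = 0` it follows by pairing `j` with
`N - j`, and it propagates in `k` because consecutive sums differ by
`∑_{0<j<N} ζ^(-(k+1)j) = -1`.
-/

open Finset

lemma Finset.sum_range_eq_add_sum_Ioo {M : Type*} [AddCommMonoid M] {N : ℕ} (hN : 0 < N)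
    (f : ℕ → M) : ∑ j ∈ range N, f j = f 0 + ∑ j ∈ Ioo 0 N, f j := by
  rw [range_eq_Ico, sum_eq_sum_Ico_succ_bot hN, Ico_add_one_left_eq_Ioo]

lemma Finset.sum_Ioo_zero_reflect {M : Type*} [AddCommMonoid M] (N : ℕ) (f : ℕ → M) :
    ∑ j ∈ Ioo 0 N, f (N - j) = ∑ j ∈ Ioo 0 N, f j :=
  sum_nbij' (N - ·) (N - ·) (by intro j; simp; omega) (by intro j; simp; omega)
    (by intro j; simp; omega) (by intro j; simp; omega) (fun _ _ => rfl)

lemma sum_Ioo_pow_eq_neg_one {K : Type*} [Field K] {N : ℕ} {a : K} (ha : a ^ N = 1)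
    (ha1 : a ≠ 1) (hN : 0 < N) : ∑ j ∈ Ioo 0 N, a ^ j = -1 := by
  have h := sum_range_eq_add_sum_Ioo hN (a ^ ·)
  rw [geom_sum_eq ha1, ha, sub_self, zero_div, pow_zero] at h
  linear_combination -h

namespace IsPrimitiveRoot

variable {K : Type*} [Field K] {N : ℕ} {ζ : K}

lemma two_mul_sum_one_div_one_sub_pow (hζ : IsPrimitiveRoot ζ N) (hN : 0 < N) :
    2 * ∑ j ∈ Ioo 0 N, 1 / (1 - ζ ^ j) = N - 1 := by
  -- `ζ ^ (N - j) = (ζ ^ j)⁻¹` and `1 / (1 - a) + 1 / (1 - a⁻¹) = 1`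
  have hpair : ∀ j ∈ Ioo 0 N, 1 / (1 - ζ ^ j) + 1 / (1 - ζ ^ (N - j)) = 1 := by
    intro j hj
    obtain ⟨hj0, hjN⟩ := mem_Ioo.mp hj
    have hne : ζ ^ j ≠ 1 := hζ.pow_ne_one_of_pos_of_lt hj0.ne' hjN
    have hne0 : ζ ^ j ≠ 0 := pow_ne_zero _ (hζ.ne_zero hN.ne')
    rw [pow_sub₀ _ (hζ.ne_zero hN.ne') hjN.le, hζ.pow_eq_one, one_mul]
    have : 1 - ζ ^ j ≠ 0 := sub_ne_zero.mpr hne.symm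
    have : 1 - (ζ ^ j)⁻¹ ≠ 0 := sub_ne_zero.mpr (inv_ne_one.mpr hne).symm
    field_simp
    ring
  rw [two_mul]
  nth_rw 2 [← sum_Ioo_zero_reflect N]
  rw [← sum_add_distrib, sum_congr rfl hpair, sum_const, Nat.card_Ioo, nsmul_one, Nat.sub_zero,
    Nat.cast_pred hN]

lemma sum_pow_succ_div_one_sub_pow (hζ : IsPrimitiveRoot ζ N) {k : ℕ} (hk : k + 1 < N) :
    ∑ j ∈ Ioo 0 N, (ζ⁻¹ ^ (k + 1)) ^ j / (1 - ζ ^ j) =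
      ∑ j ∈ Ioo 0 N, (ζ⁻¹ ^ k) ^ j / (1 - ζ ^ j) - 1 := by
  have hN : 0 < N := by omega
  have hterm : ∀ j ∈ Ioo 0 N, (ζ⁻¹ ^ (k + 1)) ^ j / (1 - ζ ^ j) - (ζ⁻¹ ^ k) ^ j / (1 - ζ ^ j) =
      (ζ⁻¹ ^ (k + 1)) ^ j := by
    intro j hj
    obtain ⟨hj0, hjN⟩ := mem_Ioo.mp hj
    have : 1 - ζ ^ j ≠ 0 := sub_ne_zero.mpr (hζ.pow_ne_one_of_pos_of_lt hj0.ne' hjN).symm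
    have : ζ ^ j ≠ 0 := pow_ne_zero _ (hζ.ne_zero hN.ne')
    rw [pow_succ, mul_pow, inv_pow ζ j]
    field_simp
  have hpow : (ζ⁻¹ ^ (k + 1)) ^ N = 1 := by rw [pow_right_comm, hζ.inv.pow_eq_one, one_pow]
  have hne : ζ⁻¹ ^ (k + 1) ≠ 1 := hζ.inv.pow_ne_one_of_pos_of_lt k.succ_ne_zero hk
  have hdiff := sum_congr rfl hterm
  rw [sum_sub_distrib, sum_Ioo_pow_eq_neg_one hpow hne hN] at hdiff
  linear_combination hdiff

lemma two_mul_sum_pow_div_one_sub_pow (hζ : IsPrimitiveRoot ζ N) {k : ℕ} (hk : k < N) :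
    2 * ∑ j ∈ Ioo 0 N, (ζ⁻¹ ^ k) ^ j / (1 - ζ ^ j) = N - 1 - 2 * k := by
  induction k with
  | zero =>
    simpa only [pow_zero, one_pow, Nat.cast_zero, mul_zero, sub_zero]
      using hζ.two_mul_sum_one_div_one_sub_pow (by omega)
  | succ k ih =>
    rw [hζ.sum_pow_succ_div_one_sub_pow hk, mul_sub, ih (by omega)]
    push_cast
    ring

lemma sum_mul_eq_sum_div_one_sub_pow [CharZero K] (hζ : IsPrimitiveRoot ζ N) (t : ℕ → K) :
    ∑ k ∈ range N, (1 / 2 - (k : K) / N) * t k =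
      (∑ k ∈ range N, t k) / (2 * N) +
        1 / N * ∑ j ∈ Ioo 0 N, (∑ k ∈ range N, (ζ⁻¹ ^ k) ^ j * t k) / (1 - ζ ^ j) := by
  have hcoef : ∀ k ∈ range N, (1 / 2 - (k : K) / N) * t k =
      t k / (2 * N) + 1 / N * ∑ j ∈ Ioo 0 N, (ζ⁻¹ ^ k) ^ j * t k / (1 - ζ ^ j) := by
    intro k hk
    have hN : (N : K) ≠ 0 := Nat.cast_ne_zero.mpr (by simp at hk; omega)
    have h := hζ.two_mul_sum_pow_div_one_sub_pow (mem_range.mp hk)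
    have hfactor : ∑ j ∈ Ioo 0 N, (ζ⁻¹ ^ k) ^ j * t k / (1 - ζ ^ j) =
        (∑ j ∈ Ioo 0 N, (ζ⁻¹ ^ k) ^ j / (1 - ζ ^ j)) * t k := by
      rw [sum_mul]
      exact sum_congr rfl fun _ _ => by ring
    rw [hfactor]
    generalize ∑ j ∈ Ioo 0 N, (ζ⁻¹ ^ k) ^ j / (1 - ζ ^ j) = S at h
    field_simp
    linear_combination (-t k) * h
  rw [sum_congr rfl hcoef, sum_add_distrib, ← sum_div, ← mul_sum, sum_comm]
  simp only [sum_div]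

end IsPrimitiveRoot

namespace Module.End

lemma pow_apply_of_mem_eigenspace {R M : Type*} [CommRing R] [AddCommGroup M] [Module R M]
    {f : End R M} {μ : R} {x : M} (hx : x ∈ f.eigenspace μ) (n : ℕ) :
    (f ^ n) x = μ ^ n • x := by
  rcases eq_or_ne x 0 with rfl | hx0
  · simp
  · exact HasEigenvector.pow_apply ⟨hx, hx0⟩ n

variable {K V : Type*} [Field K] [AddCommGroup V] [Module K V]

lemma HasEigenvalue.pow_eq_one {f : End K V} {μ : K} {N : ℕ} (hμ : f.HasEigenvalue μ)
    (hf : f ^ N = 1) : μ ^ N = 1 := by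
  obtain ⟨v, hv⟩ := hμ.exists_hasEigenvector
  have h := hv.pow_apply N
  rw [hf, one_apply] at h
  have h0 : (μ ^ N - 1) • v = 0 := by rw [sub_smul, one_smul, ← h, sub_self]
  exact sub_eq_zero.mp ((smul_eq_zero.mp h0).resolve_right hv.2)

variable [IsAlgClosed K] [FiniteDimensional K V] {N : ℕ} [NeZero N] {ω : K} {X : End K V}

lemma isInternal_eigenspace_pow (hω : IsPrimitiveRoot ω N) (hX : X ^ N = 1) :
    DirectSum.IsInternal fun k : Fin N => X.eigenspace (ω ^ (k : ℕ)) := by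
  have hsemi : X.IsSemisimple := by
    refine isSemisimple_of_squarefree_aeval_eq_zero
      (Polynomial.separable_X_pow_sub_C 1 hω.neZero'.out one_ne_zero).squarefree ?_
    simp [hX]
  refine DirectSum.isInternal_submodule_of_iSupIndep_of_iSup_eq_top
    (X.eigenspaces_iSupIndep.comp fun a b h => Fin.ext (hω.pow_inj a.2 b.2 h)) ?_
  rw [eq_top_iff, ← hsemi.iSup_eigenspace_eq_top]
  refine iSup_le fun μ => ?_
  by_cases hμ : X.HasEigenvalue μ
  · obtain ⟨k, hk, rfl⟩ := hω.eq_pow_of_pow_eq_one (hμ.pow_eq_one hX)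
    exact le_iSup_of_le ⟨k, hk⟩ le_rfl
  · rw [hasEigenvalue_iff, not_not] at hμ
    simp [hμ]

lemma trace_pow_mul_eq_sum_eigenspace (hω : IsPrimitiveRoot ω N) (hX : X ^ N = 1)
    {g : End K V} (hcomm : Commute X g) (j : ℕ) :
    LinearMap.trace K V (X ^ j * g) = ∑ k ∈ range N, (ω ^ k) ^ j *
      LinearMap.trace K _ (g.restrict (mapsTo_genEigenspace_of_comm hcomm (ω ^ k) 1)) := by
  have hcomm' : Commute X (X ^ j * g) := ((Commute.refl X).pow_right j).mul_right hcomm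
  rw [LinearMap.trace_eq_sum_trace_restrict (isInternal_eigenspace_pow hω hX)
    (fun k => mapsTo_genEigenspace_of_comm hcomm' _ 1), ← Fin.sum_univ_eq_sum_range]
  refine sum_congr rfl fun k _ => ?_
  rw [← smul_eq_mul ((ω ^ (k : ℕ)) ^ j), ← map_smul]
  congr 1
  ext x
  exact pow_apply_of_mem_eigenspace (mapsTo_genEigenspace_of_comm hcomm _ 1 x.2) j

end Module.End

open Complex in
lemma Complex.exp_two_pi_I_mul_div (j N : ℕ) :
    exp (2 * Real.pi * I * j / N) = exp (2 * Real.pi * I / N) ^ j := by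
  rw [← exp_nat_mul]
  ring_nf

/-- Let `V` be a finite dimensional complex vector space, `X` and `g`
commuting endomorphisms with `X ^ N = 1`, and for `0 ≤ k < N` let `V_k` be the
eigenspace of `X` with eigenvalue `exp (-2πik/N)` (each is `g`-invariant).  Then
`∑_{0 ≤ k < N} (1/2 - k/N) Tr(g|V_k)
  = Tr(g)/(2N) + (1/N) ∑_{0 < j < N} Tr(X^j g)/(1 - exp (2πij/N))`. -/
theorem trace_eigenspace_identity {V : Type*} [AddCommGroup V] [Module ℂ V]
    [FiniteDimensional ℂ V] (N : ℕ) (hN : 0 < N) (X g : Module.End ℂ V)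
    (hcomm : Commute X g) (hX : X ^ N = 1) :
    ∑ k ∈ Finset.range N, ((1 : ℂ) / 2 - (k : ℂ) / (N : ℂ)) *
        LinearMap.trace ℂ _
          (g.restrict (fun x hx => Module.End.mapsTo_genEigenspace_of_comm hcomm
            (Complex.exp (-(2 * Real.pi * Complex.I * (k : ℂ) / (N : ℂ)))) 1 hx)) =
      LinearMap.trace ℂ V g / (2 * (N : ℂ)) +
        (1 / (N : ℂ)) * ∑ j ∈ Finset.Ioo 0 N,
          LinearMap.trace ℂ V (X ^ j * g) /
            (1 - Complex.exp (2 * Real.pi * Complex.I * (j : ℂ) / (N : ℂ))) := by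
  have : NeZero N := ⟨hN.ne'⟩
  set ζ := Complex.exp (2 * Real.pi * Complex.I / N)
  have hζ : IsPrimitiveRoot ζ N := Complex.isPrimitiveRoot_exp N hN.ne'
  have hexp_neg (k : ℕ) : Complex.exp (-(2 * Real.pi * Complex.I * k / N)) = ζ⁻¹ ^ k := by
    rw [Complex.exp_neg, Complex.exp_two_pi_I_mul_div, inv_pow]
  have htrace (j : ℕ) : LinearMap.trace ℂ V (X ^ j * g) = ∑ k ∈ range N, (ζ⁻¹ ^ k) ^ j *
      LinearMap.trace ℂ _ (g.restrict (fun _ hx => Module.End.mapsTo_genEigenspace_of_comm hcomm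
        (Complex.exp (-(2 * Real.pi * Complex.I * (k : ℂ) / (N : ℂ)))) 1 hx)) := by
    rw [Module.End.trace_pow_mul_eq_sum_eigenspace hζ.inv hX hcomm j]
    refine sum_congr rfl fun k _ => ?_
    rw [hexp_neg]
  have htrace_g := htrace 0
  simp only [pow_zero, one_mul] at htrace_g
  simp only [Complex.exp_two_pi_I_mul_div, htrace, htrace_g]
  exact hζ.sum_mul_eq_sum_div_one_sub_pow _
end

section
/- Let N be a positive integer with 4 | N, let a and c be coprime integers, set t := N/gcd(c², N) and d := 1 − act. Then d is odd, and gcd(c²t, d) = 1. Define ε := (c²t/|d|) if d ≡ 1 (mod 4) and ε := −i·(c²t/|d|) if d ≡ 3 (mod 4), where (·/·) is the Jacobi symbol (with the convention (m/1) = 1). Write 2‖c for '2 divides c but 4 does not', 4‖N for '4 divides N but 8 does not', and 8‖N for '8 divides N but 16 does not'. Then: ε = −i^t if 2‖c and 4‖N; ε = −1 if 2‖c and 8‖N; and ε = 1 in all other cases. -/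
/-!
Write `t = 2^k u` with `u` odd and note `d ≡ 1 (mod ct)`. Quadratic reciprocity, in the form
`(u / |d|) = (χ₄(d) d / u)` valid for negative `d` too, gives `(u / |d|) = (χ₄(d) / u)`
because `d ≡ 1 (mod u)`; moreover `(2 / |d|) = χ₈(d)`. Hence `ε = χ₈(d)^k` when
`d ≡ 1 (mod 4)`, and `ε = -i χ₄(t) = -i^t` when `d ≡ 3 (mod 4)` (then `t` is odd).
Comparing 2-adic valuations in `N = gcd(c², N) t`: `d ≡ 3 (mod 4)` exactly when `2‖c` and
`4‖N`; `k = 1` and `d ≡ 5 (mod 8)` exactly when `2‖c` and `8‖N`; otherwise `d ≡ 1 (mod 8)`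
or `k ∈ {0, 2}`.
-/

open Complex ZMod

namespace jacobiSym

theorem quadratic_reciprocity_natAbs {u : ℕ} (hu : Odd u) {d : ℤ} (hd : Odd d) :
    jacobiSym u d.natAbs = jacobiSym (χ₄ d * d) u := by
  rw [quadratic_reciprocity' hu (Int.natAbs_odd.mpr hd), qrSign, ← mul_left]
  obtain ⟨n, rfl | rfl⟩ := Int.eq_nat_or_neg d
  · simp
  · rw [Int.natAbs_neg, Int.natAbs_natCast, Int.cast_neg, Int.cast_natCast, neg_eq_neg_one_mul,
      map_mul, show χ₄ (-1) = -1 from rfl]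
    ring_nf

theorem at_two_natAbs {d : ℤ} (hd : Odd d) : jacobiSym 2 d.natAbs = χ₈ d := by
  rw [at_two (Int.natAbs_odd.mpr hd)]
  obtain ⟨n, rfl | rfl⟩ := Int.eq_nat_or_neg d
  · simp
  · rw [Int.natAbs_neg, Int.natAbs_natCast, Int.cast_neg, Int.cast_natCast, neg_eq_neg_one_mul,
      map_mul, show χ₈ (-1) = 1 from rfl, one_mul]

theorem natAbs_of_dvd_sub_one {u : ℕ} (hu : Odd u) {d : ℤ} (hd : Odd d)
    (h : (u : ℤ) ∣ d - 1) : jacobiSym u d.natAbs = jacobiSym (χ₄ d) u := by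
  have hdu : jacobiSym d u = 1 := by
    rw [mod_left' (Int.ModEq.symm (Int.modEq_iff_dvd.mpr h)), one_left]
  rw [quadratic_reciprocity_natAbs hu hd, mul_left, hdu, mul_one]

theorem two_pow_mul_natAbs_of_dvd_sub_one {u : ℕ} (hu : Odd u) {d : ℤ} (hd : Odd d)
    (h : (u : ℤ) ∣ d - 1) (k : ℕ) :
    jacobiSym (2 ^ k * u) d.natAbs = χ₈ d ^ k * jacobiSym (χ₄ d) u := by
  rw [mul_left, pow_left, at_two_natAbs hd, natAbs_of_dvd_sub_one hu hd h]

end jacobiSym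

theorem Complex.I_zpow_of_odd {n : ℤ} (hn : Odd n) : I ^ n = I * χ₄ n := by
  rw [I_zpow_eq_zpow_mod, χ₄_int_mod_four]
  rcases (by rw [Int.odd_iff] at hn; omega : n % 4 = 1 ∨ n % 4 = 3) with h | h <;> rw [h]
  · rw [zpow_one, show χ₄ ((1 : ℤ) : ZMod 4) = 1 from rfl, Int.cast_one, mul_one]
  · rw [show χ₄ ((3 : ℤ) : ZMod 4) = -1 from rfl, zpow_ofNat, I_pow_three]
    push_cast; ring

theorem Nat.Coprime.dvd_iff_of_gcd_sq_mul_eq {a m N t : ℕ} (ha : Nat.Coprime a m)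
    (h : Nat.gcd (m ^ 2) N * t = N) : a ∣ N ↔ a ∣ t := by
  have hag : Nat.Coprime a (Nat.gcd (m ^ 2) N) :=
    (ha.pow_right 2).coprime_dvd_right (Nat.gcd_dvd_left _ _)
  rw [← h, hag.dvd_mul_left]

theorem two_pow_dvd_iff_of_gcd_sq_mul_eq {m N t : ℕ} (hm : Odd m)
    (h : Nat.gcd ((2 * m) ^ 2) (4 * N) * t = 4 * N) (k : ℕ) : 2 ^ k ∣ N ↔ 2 ^ k ∣ t := by
  rw [mul_pow, show 2 ^ 2 = 4 from rfl, Nat.gcd_mul_left, mul_assoc] at h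
  exact (Nat.coprime_two_left.mpr hm).pow_left k |>.dvd_iff_of_gcd_sq_mul_eq
    (Nat.eq_of_mul_eq_mul_left (by norm_num) h)

theorem four_dvd_of_gcd_sq_mul_eq {c : ℤ} {N t : ℕ} (hc : ¬ 2 ∣ c) (hN : 4 ∣ N)
    (hgt : Nat.gcd (c.natAbs ^ 2) N * t = N) : 4 ∣ t :=
  ((Nat.coprime_two_left.mpr (Nat.odd_iff.mpr (by omega))).pow_left 2
    |>.dvd_iff_of_gcd_sq_mul_eq hgt).mp hN

/-- The `ε` of the statement, as a function of `m = c² t` and `d`. -/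
noncomputable def thetaEpsilon (m d : ℤ) : ℂ :=
  if d % 4 = 1 then (jacobiSym m d.natAbs : ℂ) else -I * jacobiSym m d.natAbs

section thetaEpsilon

variable {d : ℤ}

theorem thetaEpsilon_sq_mul {c : ℤ} (hc : IsCoprime c d) (m : ℤ) :
    thetaEpsilon (c ^ 2 * m) d = thetaEpsilon m d := by
  have hcd : c.gcd d.natAbs = 1 := (Int.isCoprime_iff_gcd_eq_one.mp hc :)
  simp only [thetaEpsilon, jacobiSym.mul_left, jacobiSym.sq_one' hcd, one_mul]

theorem thetaEpsilon_four_mul (hd : Odd d) (m : ℤ) :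
    thetaEpsilon (4 * m) d = thetaEpsilon m d := by
  simp only [thetaEpsilon, jacobiSym.mul_left, jacobiSym.at_four (Int.natAbs_odd.mpr hd), one_mul]

theorem thetaEpsilon_two_pow_mul {u : ℕ} (hu : Odd u) (hd : d % 4 = 1) (h : (u : ℤ) ∣ d - 1)
    (k : ℕ) : thetaEpsilon (2 ^ k * u) d = (χ₈ d ^ k : ℤ) := by
  rw [thetaEpsilon, if_pos hd, jacobiSym.two_pow_mul_natAbs_of_dvd_sub_one hu
    (by rw [Int.odd_iff]; omega) h, χ₄_int_one_mod_four hd, jacobiSym.one_left, mul_one]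

theorem thetaEpsilon_of_emod_four_eq_three {u : ℕ} (hu : Odd u) (hd : d % 4 = 3)
    (h : (u : ℤ) ∣ d - 1) : thetaEpsilon u d = -I ^ (u : ℤ) := by
  rw [thetaEpsilon, if_neg (by omega),
    jacobiSym.natAbs_of_dvd_sub_one hu (by rw [Int.odd_iff]; omega) h, χ₄_int_three_mod_four hd,
    jacobiSym.at_neg_one hu, I_zpow_of_odd hu.natCast, Int.cast_natCast, neg_mul]

theorem thetaEpsilon_eq_one_of_odd {u : ℕ} (hu : Odd u) (hd : d % 4 = 1)
    (h : (u : ℤ) ∣ d - 1) : thetaEpsilon u d = 1 := by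
  simpa using thetaEpsilon_two_pow_mul hu hd h 0

theorem thetaEpsilon_eq_one_of_emod_eight_eq_one {t : ℕ} (hd : d % 8 = 1)
    (h : (t : ℤ) ∣ d - 1) : thetaEpsilon t d = 1 := by
  rcases eq_or_ne t 0 with rfl | ht
  · obtain rfl : d = 1 := by simpa [sub_eq_zero] using h
    simp [thetaEpsilon]
  obtain ⟨k, u, hu, rfl⟩ := Nat.exists_eq_two_pow_mul_odd ht
  push_cast at h ⊢
  rw [thetaEpsilon_two_pow_mul hu (by omega) ((dvd_mul_left _ _).trans h),
    χ₈_int_mod_eight, hd]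
  simp

theorem thetaEpsilon_eq_one_of_four_dvd {t : ℕ} (ht : 4 ∣ t) (h : (t : ℤ) ∣ d - 1) :
    thetaEpsilon t d = 1 := by
  obtain ⟨s, rfl⟩ := ht
  rcases Nat.even_or_odd s with ⟨r, rfl⟩ | hs
  · apply thetaEpsilon_eq_one_of_emod_eight_eq_one _ h
    have := dvd_trans (⟨r, by push_cast; ring⟩ : (8 : ℤ) ∣ ↑(4 * (r + r))) h
    omega
  · push_cast at h ⊢
    have hd : d % 4 = 1 := by have := (dvd_mul_right _ _).trans h; omega
    rw [thetaEpsilon_four_mul (by rw [Int.odd_iff]; omega),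
      thetaEpsilon_eq_one_of_odd hs hd ((dvd_mul_left _ _).trans h)]

theorem thetaEpsilon_eq_one_of_four_dvd_left {c : ℤ} {t : ℕ} (hc : 4 ∣ c)
    (h : c * t ∣ d - 1) : thetaEpsilon t d = 1 := by
  rcases Nat.even_or_odd t with ⟨s, rfl⟩ | ht
  · apply thetaEpsilon_eq_one_of_emod_eight_eq_one _ ((dvd_mul_left _ _).trans h)
    have := (mul_dvd_mul hc (⟨s, by push_cast; ring⟩ : (2 : ℤ) ∣ ↑(s + s))).trans h
    omega
  · exact thetaEpsilon_eq_one_of_odd ht (by have := (dvd_mul_of_dvd_left hc _).trans h; omega)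
      ((dvd_mul_left _ _).trans h)

end thetaEpsilon

theorem thetaEpsilon_of_not_two_exactly_dvd {c d : ℤ} {N t : ℕ}
    (hc : ¬ (2 ∣ c ∧ ¬ 4 ∣ c)) (hN : 4 ∣ N) (hgt : Nat.gcd (c.natAbs ^ 2) N * t = N)
    (h : c * t ∣ d - 1) : thetaEpsilon t d = 1 := by
  by_cases hc2 : 2 ∣ c
  · exact thetaEpsilon_eq_one_of_four_dvd_left (by tauto) h
  · exact thetaEpsilon_eq_one_of_four_dvd (four_dvd_of_gcd_sq_mul_eq hc2 hN hgt)
      ((dvd_mul_left _ _).trans h)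

theorem thetaEpsilon_of_two_exactly_dvd {a c d : ℤ} {N t : ℕ} (hac : IsCoprime a c)
    (hc : 2 ∣ c ∧ ¬ 4 ∣ c) (hN : 4 ∣ N) (hgt : Nat.gcd (c.natAbs ^ 2) N * t = N)
    (hd : d = 1 - a * c * t) :
    ((4 ∣ N ∧ ¬ 8 ∣ N) → thetaEpsilon t d = -I ^ (t : ℤ)) ∧
    ((8 ∣ N ∧ ¬ 16 ∣ N) → thetaEpsilon t d = -1) ∧
    (¬ ((4 ∣ N ∧ ¬ 8 ∣ N) ∨ (8 ∣ N ∧ ¬ 16 ∣ N)) → thetaEpsilon t d = 1) := by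
  have ha : Odd a := Int.not_even_iff_odd.mp fun h2 => by
    have := Int.isUnit_iff.mp (hac.isUnit_of_dvd' h2.two_dvd hc.1)
    omega
  obtain ⟨c', rfl⟩ := hc.1
  have hc' : Odd c' := Int.odd_iff.mpr (by omega)
  obtain ⟨N', rfl⟩ := hN
  have key := two_pow_dvd_iff_of_gcd_sq_mul_eq (Int.natAbs_odd.mpr hc') (t := t)
    (by rwa [Int.natAbs_mul] at hgt)
  have h2 := key 1
  have h4 := key 2
  simp only [pow_one, show 2 ^ 2 = 4 from rfl] at h2 h4
  have hdvd : (t : ℤ) ∣ d - 1 := ⟨-(a * (2 * c')), by rw [hd]; ring⟩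
  refine ⟨fun hN => ?_, fun hN => ?_, fun hN => ?_⟩
  · have ht : Odd t := Nat.odd_iff.mpr (by omega)
    have hodd : Odd (a * c' * t) := (ha.mul hc').mul ht.natCast
    have hd' : d = 1 - 2 * (a * c' * t) := by rw [hd]; ring
    exact thetaEpsilon_of_emod_four_eq_three ht (by rw [Int.odd_iff] at hodd; omega) hdvd
  · obtain ⟨u, rfl⟩ : 2 ∣ t := h2.mp (by omega)
    have hu : Odd u := Nat.odd_iff.mpr (by omega)
    have hodd : Odd (a * c' * u) := (ha.mul hc').mul hu.natCast
    have hd' : d = 1 - 4 * (a * c' * u) := by rw [hd]; push_cast; ring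
    rw [Int.odd_iff] at hodd
    rw [show ((2 * u : ℕ) : ℤ) = 2 ^ 1 * u by push_cast; ring,
      thetaEpsilon_two_pow_mul hu (by omega) ⟨-(a * c' * 4), by rw [hd']; ring⟩,
      χ₈_int_mod_eight, show d % 8 = 5 by omega, pow_one]
    simp
  · exact thetaEpsilon_eq_one_of_four_dvd (by omega) hdvd

theorem jacobi_epsilon_of_conjugated_parabolic_general (N : ℕ) (h4 : 4 ∣ N)
    (a c : ℤ) (hac : IsCoprime a c) (t d : ℤ)
    (ht : t = (N : ℤ) / (Int.gcd (c ^ 2) (N : ℤ) : ℤ)) (hd : d = 1 - a * c * t)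
    (ε : ℂ)
    (hε : ε = if d % 4 = 1 then ((jacobiSym (c ^ 2 * t) d.natAbs : ℤ) : ℂ)
      else -Complex.I * ((jacobiSym (c ^ 2 * t) d.natAbs : ℤ) : ℂ)) :
    Odd d ∧ Int.gcd (c ^ 2 * t) d = 1 ∧
    ((2 ∣ c ∧ ¬ (4 ∣ c)) ∧ ((4 ∣ N) ∧ ¬ (8 ∣ N)) → ε = -(Complex.I ^ t)) ∧
    ((2 ∣ c ∧ ¬ (4 ∣ c)) ∧ ((8 ∣ N) ∧ ¬ (16 ∣ N)) → ε = -1) ∧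
    (¬ (((2 ∣ c ∧ ¬ (4 ∣ c)) ∧ ((4 ∣ N) ∧ ¬ (8 ∣ N))) ∨
        ((2 ∣ c ∧ ¬ (4 ∣ c)) ∧ ((8 ∣ N) ∧ ¬ (16 ∣ N)))) → ε = 1) := by
  have hg : Int.gcd (c ^ 2) N = Nat.gcd (c.natAbs ^ 2) N := by
    rw [Int.gcd, Int.natAbs_pow, Int.natAbs_natCast]
  have hgt : Nat.gcd (c.natAbs ^ 2) N * (N / Nat.gcd (c.natAbs ^ 2) N) = N :=
    Nat.mul_div_cancel' (Nat.gcd_dvd_right _ _)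
  rw [hg, ← Int.natCast_div] at ht
  generalize N / Nat.gcd (c.natAbs ^ 2) N = n at ht hgt
  subst ht
  have hdvd : c * n ∣ d - 1 := ⟨-a, by rw [hd]; ring⟩
  have hcop : IsCoprime (c * n) d := ⟨a, 1, by rw [hd]; ring⟩
  have h2 : (2 : ℤ) ∣ c * n := by
    by_cases hc2 : 2 ∣ c
    · exact dvd_mul_of_dvd_left hc2 _
    · exact dvd_mul_of_dvd_right (by have := four_dvd_of_gcd_sq_mul_eq hc2 h4 hgt; omega) _
  have hε' : ε = thetaEpsilon n d := by
    rw [hε, ← thetaEpsilon_sq_mul hcop.of_mul_left_left]; rfl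
  refine ⟨Int.odd_iff.mpr (by have := h2.trans hdvd; omega), Int.isCoprime_iff_gcd_eq_one.mp
    (hcop.of_mul_left_left.pow_left.mul_left hcop.of_mul_left_right), ?_⟩
  subst hε'
  by_cases hc : 2 ∣ c ∧ ¬ 4 ∣ c
  · simpa only [hc.1, hc.2, not_false_eq_true, true_and] using
      thetaEpsilon_of_two_exactly_dvd hac hc h4 hgt hd
  · simp only [hc, false_and, or_self, not_false_eq_true, IsEmpty.forall_iff, forall_const,
      true_and]
    exact thetaEpsilon_of_not_two_exactly_dvd hc h4 hgt hdvd

/-- Let `4 ∣ N`, `a` and `c` coprime, `t = N / gcd(c², N)`,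
`d = 1 - a c t`.  Then `d` is odd and `gcd(c² t, d) = 1`.  With
`ε = (c²t/|d|)` if `d ≡ 1 (mod 4)` and `ε = -i (c²t/|d|)` if `d ≡ 3 (mod 4)`
(Jacobi symbols), one has: `ε = -i^t` if `2‖c` and `4‖N`; `ε = -1` if `2‖c` and `8‖N`;
and `ε = 1` otherwise. -/
theorem jacobi_epsilon_of_conjugated_parabolic (N : ℕ) (hN : 0 < N) (h4 : 4 ∣ N)
    (a c : ℤ) (hac : IsCoprime a c) (t d : ℤ)
    (ht : t = (N : ℤ) / (Int.gcd (c ^ 2) (N : ℤ) : ℤ)) (hd : d = 1 - a * c * t)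
    (ε : ℂ)
    (hε : ε = if d % 4 = 1 then ((jacobiSym (c ^ 2 * t) d.natAbs : ℤ) : ℂ)
      else -Complex.I * ((jacobiSym (c ^ 2 * t) d.natAbs : ℤ) : ℂ)) :
    Odd d ∧ Int.gcd (c ^ 2 * t) d = 1 ∧
    ((2 ∣ c ∧ ¬ (4 ∣ c)) ∧ ((4 ∣ N) ∧ ¬ (8 ∣ N)) → ε = -(Complex.I ^ t)) ∧
    ((2 ∣ c ∧ ¬ (4 ∣ c)) ∧ ((8 ∣ N) ∧ ¬ (16 ∣ N)) → ε = -1) ∧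
    (¬ (((2 ∣ c ∧ ¬ (4 ∣ c)) ∧ ((4 ∣ N) ∧ ¬ (8 ∣ N))) ∨
        ((2 ∣ c ∧ ¬ (4 ∣ c)) ∧ ((8 ∣ N) ∧ ¬ (16 ∣ N)))) → ε = 1) :=
  jacobi_epsilon_of_conjugated_parabolic_general N h4 a c hac t d ht hd ε hε
end

section
/- Let N be a positive integer, let p be an odd prime dividing N, and let R = ((a,b),(c,d)) ∈ SL₂(ℤ) with N | c and R² = −I. Then p ≡ 1 (mod 4), a is not divisible by p, and the Legendre symbol (a/p) equals (−1)^{(p−1)/4}. -/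
open Matrix MatrixGroups

/-- Let `p` be an odd prime dividing `N > 0` and
`R = ((a,b),(c,d)) ∈ SL₂(ℤ)` with `N ∣ c` and `R² = -I`.  Then `p ≡ 1 (mod 4)`,
`p ∤ a`, and the Legendre symbol `(a/p)` equals `(-1)^{(p-1)/4}`. -/
theorem legendreSym_of_elliptic_order_two (N : ℕ) (hN : 0 < N) (p : ℕ) [Fact p.Prime]
    (hp_odd : Odd p) (hpN : p ∣ N) (R : SL(2, ℤ)) (hc : (N : ℤ) ∣ R 1 0)
    (hR : ((R ^ 2 : SL(2, ℤ)) : Matrix (Fin 2) (Fin 2) ℤ) = -1) :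
    p % 4 = 1 ∧ ¬ ((p : ℤ) ∣ R 0 0) ∧
      legendreSym p (R 0 0) = (-1 : ℤ) ^ ((p - 1) / 4) := by
  have hp : p.Prime := Fact.out
  have hp2 : p ≠ 2 := by rintro rfl; exact (Nat.not_odd_iff_even.mpr (by decide)) hp_odd
  have hpc : (p : ℤ) ∣ R 1 0 := dvd_trans (Int.natCast_dvd_natCast.mpr hpN) hc
  -- a² + b c = -1
  have hkey : R 0 0 * R 0 0 + R 0 1 * R 1 0 = -1 := by
    have h2 : ((R : Matrix (Fin 2) (Fin 2) ℤ) * (R : Matrix (Fin 2) (Fin 2) ℤ)) = -1 := by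
      rw [← hR]; simp [pow_two]
    have := congrFun (congrFun h2 0) 0
    simpa [Matrix.mul_apply, Fin.sum_univ_two] using this
  -- a² = -1 in ZMod p
  have hsq : ((R 0 0 : ℤ) : ZMod p) ^ 2 = -1 := by
    have : (((R 0 0 * R 0 0 + R 0 1 * R 1 0 : ℤ)) : ZMod p) = ((-1 : ℤ) : ZMod p) := by
      rw [hkey]
    obtain ⟨k, hk⟩ := hpc
    push_cast [hk] at this
    simp [ZMod.natCast_self] at this
    rw [pow_two]
    push_cast
    linear_combination this
  have hmod : p % 4 = 1 := by
    have hsq' : IsSquare (-1 : ZMod p) := ⟨((R 0 0 : ℤ) : ZMod p), by rw [← hsq]; ring⟩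
    have hne3 : p % 4 ≠ 3 := (ZMod.exists_sq_eq_neg_one_iff (p := p)).mp hsq'
    have hodd : p % 2 = 1 := Nat.odd_iff.mp hp_odd
    omega
  have hne0 : ((R 0 0 : ℤ) : ZMod p) ≠ 0 := by
    intro h
    rw [h] at hsq
    simp at hsq
  have hndvd : ¬ ((p : ℤ) ∣ R 0 0) := by
    rw [← ZMod.intCast_zmod_eq_zero_iff_dvd] at *
    exact hne0
  refine ⟨hmod, hndvd, ?_⟩
  set k := (p - 1) / 4 with hkdef
  have hpow : ((legendreSym p (R 0 0) : ℤ) : ZMod p) = (((-1 : ℤ) ^ k : ℤ) : ZMod p) := by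
    rw [legendreSym.eq_pow]
    have hhalf : p / 2 = 2 * k := by
      have := Fact.out (p := p.Prime) |>.two_le
      omega
    rw [hhalf, pow_mul]
    push_cast
    rw [hsq]
  have h2lt : 2 < p := by have := hp.two_le; omega
  haveI : Fact (2 < p) := ⟨h2lt⟩
  have hne : (-1 : ZMod p) ≠ 1 := ZMod.neg_one_ne_one
  have hcases : legendreSym p (R 0 0) = 1 ∨ legendreSym p (R 0 0) = -1 :=
    legendreSym.eq_one_or_neg_one p hne0
  rcases hcases with h1 | h1 <;> rcases Nat.even_or_odd k with h2 | h2
  · rw [h1, h2.neg_one_pow]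
  · exfalso
    rw [h1, h2.neg_one_pow] at hpow
    push_cast at hpow
    exact hne hpow.symm
  · exfalso
    rw [h1, h2.neg_one_pow] at hpow
    push_cast at hpow
    exact hne hpow
  · rw [h1, h2.neg_one_pow]
end

section
/- Let N be a positive integer, let p be an odd prime dividing N, and let R = ((a,b),(c,d)) ∈ SL₂(ℤ) with N | c and R³ = −I. Then d is not divisible by p and the Legendre symbol (d/p) equals (−1)^{(p−1)/2}. -/
open Matrix MatrixGroups

/-- Let `p` be an odd prime dividing `N > 0` and
`R = ((a,b),(c,d)) ∈ SL₂(ℤ)` with `N ∣ c` and `R³ = -I`.  Then `p ∤ d` and the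
Legendre symbol `(d/p)` equals `(-1)^{(p-1)/2}`. -/
theorem legendreSym_of_elliptic_order_three (N : ℕ) (hN : 0 < N) (p : ℕ) [Fact p.Prime]
    (hp_odd : Odd p) (hpN : p ∣ N) (R : SL(2, ℤ)) (hc : (N : ℤ) ∣ R 1 0)
    (hR : ((R ^ 3 : SL(2, ℤ)) : Matrix (Fin 2) (Fin 2) ℤ) = -1) :
    ¬ ((p : ℤ) ∣ R 1 1) ∧ legendreSym p (R 1 1) = (-1 : ℤ) ^ ((p - 1) / 2) := by
  have hpc : (p : ℤ) ∣ R 1 0 := dvd_trans (Int.natCast_dvd_natCast.mpr hpN) hc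
  have hc0 : ((R 1 0 : ℤ) : ZMod p) = 0 := by
    rwa [ZMod.intCast_zmod_eq_zero_iff_dvd]
  have hR' : (((R : Matrix (Fin 2) (Fin 2) ℤ)) ^ 3) 1 1 = -1 := by
    rw [← Matrix.SpecialLinearGroup.coe_pow, hR]; simp
  simp only [pow_succ, pow_zero, one_mul, Matrix.mul_apply, Fin.sum_univ_two] at hR'
  have hd3 : ((R 1 1 : ℤ) : ZMod p) ^ 3 = -1 := by
    have := congrArg (fun x : ℤ => (x : ZMod p)) hR'
    push_cast at this
    rw [hc0] at this
    linear_combination this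
  have hp2 : p ≠ 2 := by rintro rfl; exact (by norm_num : ¬ Odd 2) hp_odd
  have hd0 : ((R 1 1 : ℤ) : ZMod p) ≠ 0 := by
    intro h
    rw [h] at hd3
    simp at hd3
  have hnd : ¬ ((p : ℤ) ∣ R 1 1) :=
    fun h => hd0 ((ZMod.intCast_zmod_eq_zero_iff_dvd _ p).mpr h)
  refine ⟨hnd, ?_⟩
  have h1 : legendreSym p ((R 1 1) ^ 3) = legendreSym p (-1) := by
    simp only [legendreSym]
    congr 1
    push_cast
    simpa using hd3
  have hcube : legendreSym p ((R 1 1) ^ 3) = (legendreSym p (R 1 1)) ^ 3 := by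
    rw [show (R 1 1) ^ 3 = R 1 1 * R 1 1 * R 1 1 by ring, legendreSym.mul, legendreSym.mul]
    ring
  have hpow : (legendreSym p (R 1 1)) ^ 3 = legendreSym p (R 1 1) := by
    rcases legendreSym.eq_one_or_neg_one p hd0 with h | h <;> rw [h] <;> norm_num
  have hfin : legendreSym p (R 1 1) = legendreSym p (-1) := by
    rw [← hpow, ← hcube, h1]
  rw [hfin, legendreSym.at_neg_one hp2, ZMod.χ₄_eq_neg_one_pow (Nat.odd_iff.mp hp_odd)]
  have hodd : p % 2 = 1 := Nat.odd_iff.mp hp_odd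
  congr 1
  omega
end

section
/- Let A be a nondegenerate finite quadratic form of level N, i.e. N is the smallest positive integer with N·q(γ) = 0 in ℚ/ℤ for all γ ∈ A. Let c be an integer such that gcd(c,N) is a Hall divisor of N, i.e. gcd(c,N) and h := N/gcd(c,N) are coprime. Then A^{c*} = cA = A_h = {α ∈ A : hα = 0}; in particular every element of A^{c*} has order dividing h. -/
/-!
Write `c = d e` with `d = gcd(c, N)` and `h = N / d`, so that `N = d h` and `gcd(c, h) = 1`.
Nondegeneracy turns `N • b = 0` into `N • A = 0`. Then `h • (c • ε) = e • N • ε = 0` gives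
`cA ⊆ A_h`, and a Bézout relation `c u + h v = 1` gives `A_h ⊆ cA`. For `δ ∈ A^{c*}` and any `γ`,
`c` kills `h γ`, so `b γ (h δ) = b (h γ) δ = c h² q γ = 0` because `N ∣ c h²`; by nondegeneracy
`δ ∈ A_h`. Conversely, if `c γ = 0` then `d γ = 0`, so `d² q γ = q (d γ) = 0`, and since `d` and
`h` are coprime, `d q γ = 0`; thus for `δ = c ε` both `b γ δ = b (c γ) ε` and `c q γ` vanish.
-/

theorem Nat.Coprime.isCoprime_div_gcd {c : ℤ} {N : ℕ}
    (hHall : Nat.Coprime (Int.gcd c N) (N / Int.gcd c N)) :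
    IsCoprime c ((N / Int.gcd c N : ℕ) : ℤ) := by
  set h := N / Int.gcd c N
  have hhN : (h : ℤ) ∣ N := Int.natCast_dvd_natCast.mpr (Nat.div_dvd_of_dvd
    (Int.natCast_dvd_natCast.mp (Int.gcd_dvd_right c N)))
  rw [Int.isCoprime_iff_gcd_eq_one]
  exact Nat.dvd_one.mp <| hHall.gcd_eq_one ▸ Nat.dvd_gcd
    (Int.dvd_gcd (Int.gcd_dvd_left c h) ((Int.gcd_dvd_right c h).trans hhN))
    (Int.natCast_dvd_natCast.mp (Int.gcd_dvd_right c h))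

theorem IsCoprime.zsmul_eq_zero {M : Type*} [AddCommGroup M] {c h : ℤ} (hch : IsCoprime c h)
    {d : ℤ} {x : M} (hc : (d * c) • x = 0) (hh : (d * h) • x = 0) : d • x = 0 := by
  obtain ⟨u, v, huv⟩ := hch
  calc d • x = (u * (d * c) + v * (d * h)) • x := by
        rw [show u * (d * c) + v * (d * h) = d * (u * c + v * h) by ring, huv, mul_one]
    _ = 0 := by rw [add_smul, mul_smul u, mul_smul v, hc, hh, smul_zero, smul_zero, add_zero]

theorem IsCoprime.exists_zsmul_eq {A : Type*} [AddCommGroup A] {c h : ℤ} (hch : IsCoprime c h)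
    {α : A} (hα : h • α = 0) : ∃ γ, c • γ = α := by
  obtain ⟨u, v, huv⟩ := hch
  refine ⟨u • α, ?_⟩
  rw [smul_smul, show c * u = 1 - v * h by linear_combination huv, sub_smul, mul_smul, hα,
    smul_zero, sub_zero, one_smul]

section FiniteQuadraticForm

variable {A M : Type*} [AddCommGroup A] [AddCommGroup M]

theorem zsmul_left_of_add_left {b : A → A → M}
    (hb_add_left : ∀ γ₁ γ₂ δ : A, b (γ₁ + γ₂) δ = b γ₁ δ + b γ₂ δ) (k : ℤ) (γ δ : A) :
    b (k • γ) δ = k • b γ δ :=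
  map_zsmul (AddMonoidHom.mk' (b · δ) (hb_add_left · · δ)) k γ

theorem zsmul_right_of_add_right {b : A → A → M}
    (hb_add_right : ∀ γ δ₁ δ₂ : A, b γ (δ₁ + δ₂) = b γ δ₁ + b γ δ₂) (k : ℤ) (γ δ : A) :
    b γ (k • δ) = k • b γ δ :=
  map_zsmul (AddMonoidHom.mk' (b γ) (hb_add_right γ)) k δ

theorem zsmul_eq_zero_of_nondegenerate {b : A → A → M}
    (hb_add_right : ∀ γ δ₁ δ₂ : A, b γ (δ₁ + δ₂) = b γ δ₁ + b γ δ₂)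
    (hnd : Function.Injective (fun δ : A => fun γ : A => b γ δ))
    {n : ℤ} {δ : A} (hn : ∀ γ, n • b γ δ = 0) : n • δ = 0 := by
  refine hnd (funext fun γ => ?_)
  have hb0 : b γ 0 = 0 := by simpa using zsmul_right_of_add_right hb_add_right 0 γ 0
  simp only [zsmul_right_of_add_right hb_add_right, hn, hb0]

theorem zsmul_eq_zero_of_level {q : A → M} {b : A → A → M}
    (hb : ∀ γ δ : A, b γ δ = q (γ + δ) - q γ - q δ)
    (hb_add_right : ∀ γ δ₁ δ₂ : A, b γ (δ₁ + δ₂) = b γ δ₁ + b γ δ₂)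
    (hnd : Function.Injective (fun δ : A => fun γ : A => b γ δ))
    {n : ℤ} (hlevel : ∀ γ : A, n • q γ = 0) (δ : A) : n • δ = 0 :=
  zsmul_eq_zero_of_nondegenerate hb_add_right hnd fun γ => by simp [hb, smul_sub, hlevel]

variable {c d h : ℤ}

theorem zsmul_zsmul_eq_zero_of_dvd (hA : ∀ α : A, (d * h) • α = 0) (hdc : d ∣ c) (ε : A) :
    h • c • ε = 0 := by
  obtain ⟨e, rfl⟩ := hdc
  rw [smul_smul, show h * (d * e) = e * (d * h) by ring, mul_smul, hA, smul_zero]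

theorem zsmul_quadratic_eq_zero_of_zsmul_eq_zero {q : A → M}
    (hq : ∀ (k : ℤ) (γ : A), q (k • γ) = k ^ 2 • q γ)
    (hlevel : ∀ γ : A, (d * h) • q γ = 0) (hA : ∀ α : A, (d * h) • α = 0)
    (hdc : d ∣ c) (hch : IsCoprime c h) {γ : A} (hγ : c • γ = 0) : c • q γ = 0 := by
  have hdγ : d • γ = 0 := hch.zsmul_eq_zero (by rw [mul_smul, hγ, smul_zero]) (hA γ)
  have hd2 : (d * d) • q γ = 0 := by
    rw [← sq, ← hq, hdγ]
    simpa using hq 0 0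
  obtain ⟨e, rfl⟩ := hdc
  rw [mul_comm, mul_smul, (hch.of_isCoprime_of_dvd_left (dvd_mul_right d e)).zsmul_eq_zero hd2
    (hlevel γ), smul_zero]

theorem polar_zsmul_eq_of_zsmul_eq_zero {q : A → M} {b : A → A → M}
    (hq : ∀ (k : ℤ) (γ : A), q (k • γ) = k ^ 2 • q γ)
    (hb_add_left : ∀ γ₁ γ₂ δ : A, b (γ₁ + γ₂) δ = b γ₁ δ + b γ₂ δ)
    (hb_add_right : ∀ γ δ₁ δ₂ : A, b γ (δ₁ + δ₂) = b γ δ₁ + b γ δ₂)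
    (hlevel : ∀ γ : A, (d * h) • q γ = 0) (hA : ∀ α : A, (d * h) • α = 0)
    (hdc : d ∣ c) (hch : IsCoprime c h) (ε : A) {γ : A} (hγ : c • γ = 0) :
    b γ (c • ε) = c • q γ := by
  rw [zsmul_quadratic_eq_zero_of_zsmul_eq_zero hq hlevel hA hdc hch hγ,
    zsmul_right_of_add_right hb_add_right, ← zsmul_left_of_add_left hb_add_left, hγ]
  simpa using zsmul_left_of_add_left hb_add_left 0 0 ε

theorem zsmul_eq_zero_of_mem_cStar {q : A → M} {b : A → A → M}
    (hq : ∀ (k : ℤ) (γ : A), q (k • γ) = k ^ 2 • q γ)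
    (hb_add_left : ∀ γ₁ γ₂ δ : A, b (γ₁ + γ₂) δ = b γ₁ δ + b γ₂ δ)
    (hb_add_right : ∀ γ δ₁ δ₂ : A, b γ (δ₁ + δ₂) = b γ δ₁ + b γ δ₂)
    (hnd : Function.Injective (fun δ : A => fun γ : A => b γ δ))
    (hlevel : ∀ γ : A, (d * h) • q γ = 0) (hA : ∀ α : A, (d * h) • α = 0) (hdc : d ∣ c)
    {δ : A} (hδ : ∀ γ : A, c • γ = 0 → b γ δ = c • q γ) : h • δ = 0 := by
  refine zsmul_eq_zero_of_nondegenerate hb_add_right hnd fun γ => ?_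
  have hcγ : c • h • γ = 0 := by rw [smul_comm]; exact zsmul_zsmul_eq_zero_of_dvd hA hdc γ
  obtain ⟨e, rfl⟩ := hdc
  rw [← zsmul_left_of_add_left hb_add_left, hδ _ hcγ, hq, smul_smul,
    show d * e * h ^ 2 = e * h * (d * h) by ring, mul_smul, hlevel, smul_zero]

end FiniteQuadraticForm

theorem cStar_eq_smul_eq_torsion_of_hall_general
    {A : Type*} [AddCommGroup A]
    (q : A → AddCircle (1 : ℚ))
    (hq : ∀ (k : ℤ) (γ : A), q (k • γ) = k ^ 2 • q γ)
    (b : A → A → AddCircle (1 : ℚ))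
    (hb : ∀ γ δ : A, b γ δ = q (γ + δ) - q γ - q δ)
    (hb_add_left : ∀ γ₁ γ₂ δ : A, b (γ₁ + γ₂) δ = b γ₁ δ + b γ₂ δ)
    (hb_add_right : ∀ γ δ₁ δ₂ : A, b γ (δ₁ + δ₂) = b γ δ₁ + b γ δ₂)
    (hnd : Function.Injective (fun δ : A => fun γ : A => b γ δ))
    (N : ℕ)
    (hlevel : ∀ γ : A, (N : ℤ) • q γ = 0)
    (c : ℤ) (hHall : Nat.Coprime (Int.gcd c (N : ℤ)) (N / Int.gcd c (N : ℤ))) :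
    {δ : A | ∀ γ : A, c • γ = 0 → b γ δ = c • q γ} = {δ : A | ∃ γ : A, c • γ = δ} ∧
    {δ : A | ∃ γ : A, c • γ = δ} =
      {α : A | ((N / Int.gcd c (N : ℤ) : ℕ) : ℤ) • α = 0} := by
  have hch := hHall.isCoprime_div_gcd
  have hdc := Int.gcd_dvd_left c N
  have hdh : ((Int.gcd c N : ℕ) : ℤ) * ((N / Int.gcd c N : ℕ) : ℤ) = N := by
    exact_mod_cast Nat.mul_div_cancel' (Int.natCast_dvd_natCast.mp (Int.gcd_dvd_right c N))
  rw [← hdh] at hlevel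
  have hA := zsmul_eq_zero_of_level hb hb_add_right hnd hlevel
  refine ⟨Set.ext fun δ => ⟨fun hδ => hch.exists_zsmul_eq ?_, ?_⟩,
    Set.ext fun α => ⟨?_, hch.exists_zsmul_eq⟩⟩
  · exact zsmul_eq_zero_of_mem_cStar hq hb_add_left hb_add_right hnd hlevel hA hdc hδ
  · rintro ⟨ε, rfl⟩ γ hγ
    exact polar_zsmul_eq_of_zsmul_eq_zero hq hb_add_left hb_add_right hlevel hA hdc hch ε hγ
  · rintro ⟨ε, rfl⟩
    exact zsmul_zsmul_eq_zero_of_dvd hA hdc ε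

/-- Let `A` be a nondegenerate finite quadratic form of level `N`
(the smallest positive integer with `N q(γ) = 0` for all `γ`), and let `c` be an integer
such that `gcd(c, N)` is a Hall divisor of `N`, i.e. `gcd(c, N)` and `h = N / gcd(c, N)`
are coprime.  Then `A^{c*} = cA = A_h`; in particular every element of `A^{c*}` has
order dividing `h`. -/
theorem cStar_eq_smul_eq_torsion_of_hall
    {A : Type*} [AddCommGroup A] [Fintype A]
    (q : A → AddCircle (1 : ℚ))
    (hq : ∀ (k : ℤ) (γ : A), q (k • γ) = k ^ 2 • q γ)
    (b : A → A → AddCircle (1 : ℚ))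
    (hb : ∀ γ δ : A, b γ δ = q (γ + δ) - q γ - q δ)
    (hb_add_left : ∀ γ₁ γ₂ δ : A, b (γ₁ + γ₂) δ = b γ₁ δ + b γ₂ δ)
    (hb_add_right : ∀ γ δ₁ δ₂ : A, b γ (δ₁ + δ₂) = b γ δ₁ + b γ δ₂)
    (hnd : Function.Injective (fun δ : A => fun γ : A => b γ δ))
    (N : ℕ) (hN : 0 < N)
    (hlevel : ∀ γ : A, (N : ℤ) • q γ = 0)
    (hmin : ∀ m : ℕ, 0 < m → (∀ γ : A, (m : ℤ) • q γ = 0) → N ≤ m)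
    (c : ℤ) (hHall : Nat.Coprime (Int.gcd c (N : ℤ)) (N / Int.gcd c (N : ℤ))) :
    {δ : A | ∀ γ : A, c • γ = 0 → b γ δ = c • q γ} = {δ : A | ∃ γ : A, c • γ = δ} ∧
    {δ : A | ∃ γ : A, c • γ = δ} =
      {α : A | ((N / Int.gcd c (N : ℤ) : ℕ) : ℤ) • α = 0} :=
  cStar_eq_smul_eq_torsion_of_hall_general q hq b hb hb_add_left hb_add_right hnd N hlevel c hHall
end
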